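/- arXiv:2410.01112 — 9 statements merged into one kernel-verified Lean document; each statement's English description precedes it below -/
import Mathlib

section
/- Let Q be a centered distribution with positive variance whose MGF is finite on an interval containing [0, u], and let η > 0, 0 < a ≤ b satisfy Q([−b, −a]) ≥ η. Then for all u ≥ 0 in the interior of the MGF's domain, the variance of the tilted distribution satisfies μ'(u) ≥ a²·η·e^{−ub}/M_Q(u). -/
open MeasureTheory Real ProbabilityTheory

/-- The exponential tilt of a distribution `Q` on ℝ at parameter `u`. -/
noncomputable def tilt (Q : Measure ℝ) (u : ℝ) : Measure ℝ :=
  Q.withDensity (fun y => ENNReal.ofReal (Real.exp (u * y) / ∫ z, Real.exp (u * z) ∂Q))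

lemma self_le_exp' (x : ℝ) : x ≤ exp x := by linarith [Real.add_one_le_exp x]

lemma integrable_aux {Q : Measure ℝ} {u ε C : ℝ} (hε : 0 < ε)
    (h1 : Integrable (fun y => exp ((u + ε/2) * y)) Q)
    (h2 : Integrable (fun y => exp ((u - ε/2) * y)) Q)
    {g : ℝ → ℝ} (hg : AEStronglyMeasurable g Q)
    (hbound : ∀ y, |g y| ≤ C * exp (ε/2 * |y|)) :
    Integrable (fun y => g y * exp (u * y)) Q := by
  refine Integrable.mono' ((h1.add h2).const_mul C) (hg.mul (Real.measurable_exp.comp (measurable_const.mul measurable_id)).aestronglyMeasurable) ?_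
  filter_upwards with y
  rw [norm_mul, norm_eq_abs, norm_eq_abs, abs_exp]
  calc |g y| * exp (u * y) ≤ (C * exp (ε/2 * |y|)) * exp (u * y) :=
        mul_le_mul_of_nonneg_right (hbound y) (exp_nonneg _)
    _ = C * exp (u * y + ε/2 * |y|) := by rw [mul_assoc, ← exp_add]; ring_nf
    _ ≤ C * (exp ((u + ε/2) * y) + exp ((u - ε/2) * y)) := by
        have hC : 0 ≤ C := by
          have := hbound 0
          simp only [abs_nonneg, mul_comm] at this
          nlinarith [abs_nonneg (g 0), exp_pos (ε/2 * |(0:ℝ)|), hbound 0]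
        refine mul_le_mul_of_nonneg_left ?_ hC
        rcases abs_cases y with ⟨h, _⟩ | ⟨h, _⟩
        · rw [h]
          have h' : exp (u * y + ε/2 * y) ≤ exp ((u + ε/2) * y) :=
            exp_le_exp.2 (le_of_eq (by ring))
          nlinarith [exp_nonneg ((u - ε/2) * y)]
        · rw [h]
          have h' : exp (u * y + ε/2 * -y) ≤ exp ((u - ε/2) * y) :=
            exp_le_exp.2 (le_of_eq (by ring))
          nlinarith [exp_nonneg ((u + ε/2) * y)]

/-- lower bound on the variance of the tilted distribution:
`μ'(u) = Var(Q_u) ≥ a² η e^{-ub} / M_Q(u)` for `u ≥ 0` in the interior of the MGF domain,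
provided `Q` is centered with positive variance and `Q([-b,-a]) ≥ η`. -/
theorem stmt_7 (Q : Measure ℝ) [IsProbabilityMeasure Q]
    (hint : Integrable (fun y : ℝ => y) Q)
    (hcent : ∫ y, y ∂Q = 0)
    (h2 : MemLp (fun y : ℝ => y) 2 Q)
    (hvar : 0 < variance (fun y : ℝ => y) Q)
    (η a b u : ℝ) (hη : 0 < η) (ha : 0 < a) (hab : a ≤ b)
    (hmass : η ≤ (Q (Set.Icc (-b) (-a))).toReal)
    (hu : 0 ≤ u)
    (hmgf : ∃ ε > (0 : ℝ), ∀ v : ℝ, -ε < v → v < u + ε →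
      Integrable (fun y : ℝ => Real.exp (v * y)) Q) :
    a ^ 2 * η * Real.exp (-u * b) / (∫ z, Real.exp (u * z) ∂Q)
      ≤ variance (fun y : ℝ => y) (tilt Q u) := by
  obtain ⟨ε, hε, hI⟩ := hmgf
  have hIu : Integrable (fun y => exp (u * y)) Q := hI u (by linarith) (by linarith)
  set M := ∫ z, exp (u * z) ∂Q with hM_def
  haveI : NeZero Q := ⟨IsProbabilityMeasure.ne_zero Q⟩
  have hM : 0 < M := integral_exp_pos hIu
  have hIp := hI (u + ε/2) (by linarith) (by linarith)
  have hIm := hI (u - ε/2) (by linarith) (by linarith)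
  have hlin : Integrable (fun y => y * exp (u * y)) Q := by
    refine integrable_aux (C := 2/ε) hε hIp hIm aestronglyMeasurable_id ?_
    intro y
    have h1 := self_le_exp' (ε/2 * |y|)
    calc |(fun y : ℝ => y) y| = 2/ε * (ε/2 * |y|) := by field_simp
      _ ≤ 2/ε * exp (ε/2 * |y|) := mul_le_mul_of_nonneg_left h1 (by positivity)
  have hsq : Integrable (fun y => y ^ 2 * exp (u * y)) Q := by
    refine integrable_aux (C := 16/ε^2) hε hIp hIm (by fun_prop) ?_
    intro y
    have h1 := self_le_exp' (ε/4 * |y|)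
    have hnn : (0:ℝ) ≤ ε/4 * |y| := by positivity
    have hsq1 : (ε/4 * |y|) ^ 2 ≤ exp (ε/4 * |y|) ^ 2 := by nlinarith [exp_pos (ε/4*|y|)]
    have hexp2 : exp (ε/4 * |y|) ^ 2 = exp (ε/2 * |y|) := by
      rw [sq, ← exp_add]; ring_nf
    rw [hexp2] at hsq1
    rw [abs_of_nonneg (sq_nonneg y)]
    have : y ^ 2 = (16 / ε ^ 2) * (ε/4 * |y|) ^ 2 := by
      field_simp; rw [sq_abs]; ring
    rw [this]
    have hc : (0:ℝ) < 16 / ε ^ 2 := by positivity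
    nlinarith [hsq1]
  -- the tilted measure
  have htilt : tilt Q u = Q.tilted (fun y => u * y) := rfl
  rw [htilt]
  have hprob : IsProbabilityMeasure (Q.tilted fun y => u * y) :=
    isProbabilityMeasure_tilted hIu
  -- transfer integrability to the tilted measure
  have hdens_meas : Measurable fun y : ℝ => ENNReal.ofReal (exp (u * y) / M) := by fun_prop
  have hdens_lt : ∀ᵐ y ∂Q, ENNReal.ofReal (exp (u * y) / M) < ⊤ :=
    Filter.Eventually.of_forall fun y => ENNReal.ofReal_lt_top
  have htoReal : ∀ y : ℝ, (ENNReal.ofReal (exp (u * y) / M)).toReal = exp (u * y) / M :=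
    fun y => ENNReal.toReal_ofReal (by positivity)
  have htilt_def : Q.tilted (fun y => u * y)
      = Q.withDensity (fun y => ENNReal.ofReal (exp (u * y) / M)) := rfl
  have hy_tilt : Integrable (fun y : ℝ => y) (Q.tilted fun y => u * y) := by
    rw [htilt_def, integrable_withDensity_iff hdens_meas hdens_lt]
    simp_rw [htoReal, mul_div_assoc']
    exact hlin.div_const M
  have hy2_tilt : Integrable (fun y : ℝ => y ^ 2) (Q.tilted fun y => u * y) := by
    rw [htilt_def, integrable_withDensity_iff hdens_meas hdens_lt]
    simp_rw [htoReal, mul_div_assoc']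
    exact hsq.div_const M
  have hmem : MemLp (fun y : ℝ => y) 2 (Q.tilted fun y => u * y) :=
    (memLp_two_iff_integrable_sq aestronglyMeasurable_id).2 hy2_tilt
  -- FKG-type: ∫ y e^{uy} ≥ 0
  have key : 0 ≤ ∫ y, y * exp (u * y) ∂Q := by
    have hpt : ∀ p : ℝ × ℝ, 0 ≤ (p.1 - p.2) * (exp (u * p.1) - exp (u * p.2)) := by
      intro p
      rcases le_total p.2 p.1 with h | h
      · exact mul_nonneg (by linarith)
          (sub_nonneg.2 (exp_le_exp.2 (mul_le_mul_of_nonneg_left h hu)))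
      · have h1 : p.1 - p.2 ≤ 0 := by linarith
        have h2' : exp (u * p.1) - exp (u * p.2) ≤ 0 :=
          sub_nonpos.2 (exp_le_exp.2 (mul_le_mul_of_nonneg_left h hu))
        nlinarith
    have hprod : 0 ≤ ∫ p : ℝ × ℝ, (p.1 - p.2) * (exp (u * p.1) - exp (u * p.2)) ∂(Q.prod Q) :=
      integral_nonneg hpt
    have i1 : Integrable (fun p : ℝ × ℝ => (p.1 * exp (u * p.1)) * (1:ℝ)) (Q.prod Q) :=
      hlin.mul_prod (integrable_const 1)
    have i2 : Integrable (fun p : ℝ × ℝ => p.1 * exp (u * p.2)) (Q.prod Q) :=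
      hint.mul_prod hIu
    have i3 : Integrable (fun p : ℝ × ℝ => exp (u * p.1) * p.2) (Q.prod Q) :=
      hIu.mul_prod hint
    have i4 : Integrable (fun p : ℝ × ℝ => (1:ℝ) * (p.2 * exp (u * p.2))) (Q.prod Q) :=
      (integrable_const (1:ℝ)).mul_prod hlin
    have hexpand : (fun p : ℝ × ℝ => (p.1 - p.2) * (exp (u * p.1) - exp (u * p.2)))
        = fun p : ℝ × ℝ => ((p.1 * exp (u * p.1)) * (1:ℝ) - p.1 * exp (u * p.2)
            - exp (u * p.1) * p.2) + (1:ℝ) * (p.2 * exp (u * p.2)) := by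
      funext p; ring
    have i12 : Integrable (fun p : ℝ × ℝ => (p.1 * exp (u * p.1)) * (1:ℝ)
        - p.1 * exp (u * p.2)) (Q.prod Q) := i1.sub i2
    have i123 : Integrable (fun p : ℝ × ℝ => (p.1 * exp (u * p.1)) * (1:ℝ)
        - p.1 * exp (u * p.2) - exp (u * p.1) * p.2) (Q.prod Q) := i12.sub i3
    rw [hexpand, integral_add i123 i4, integral_sub i12 i3,
      integral_sub i1 i2,
      integral_prod_mul (fun x : ℝ => x * exp (u * x)) (fun _ : ℝ => (1:ℝ)),
      integral_prod_mul (fun x : ℝ => x) (fun x : ℝ => exp (u * x)),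
      integral_prod_mul (fun x : ℝ => exp (u * x)) (fun x : ℝ => x),
      integral_prod_mul (fun _ : ℝ => (1:ℝ)) (fun x : ℝ => x * exp (u * x))] at hprod
    simp only [hcent, integral_const, measure_univ, ENNReal.toReal_one, probReal_univ, smul_eq_mul,
      one_mul, mul_one, mul_zero, zero_mul, sub_zero] at hprod
    linarith
  -- the tilted mean is nonnegative
  set m := ∫ y, y ∂(Q.tilted fun y => u * y) with hm_def
  have hm : 0 ≤ m := by
    rw [hm_def, integral_tilted]
    have : (fun y => (exp (u * y) / ∫ x, exp (u * x) ∂Q) • y)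
        = fun y => (y * exp (u * y)) / M := by
      funext y; rw [smul_eq_mul, ← hM_def]; ring
    rw [this, integral_div]
    exact div_nonneg key hM.le
  -- variance identity
  have hvar_eq : variance (fun y : ℝ => y) (Q.tilted fun y => u * y)
      = ∫ y, (y - m) ^ 2 ∂(Q.tilted fun y => u * y) := by
    rw [variance_eq_integral hmem.aestronglyMeasurable.aemeasurable]
  set A : Set ℝ := Set.Icc (-b) (-a) with hA_def
  have hAmeas : MeasurableSet A := measurableSet_Icc
  have h_int_sq : Integrable (fun y : ℝ => (y - m) ^ 2) (Q.tilted fun y => u * y) := by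
    have := (memLp_two_iff_integrable_sq
      ((hmem.sub (memLp_const m)).aestronglyMeasurable)).1 (hmem.sub (memLp_const m))
    simpa using this
  have step1 : a ^ 2 * ((Q.tilted fun y => u * y) A).toReal
      ≤ variance (fun y : ℝ => y) (Q.tilted fun y => u * y) := by
    rw [hvar_eq]
    have hind : ∫ y, A.indicator (fun _ => a ^ 2) y ∂(Q.tilted fun y => u * y)
        = ((Q.tilted fun y => u * y) A).toReal • a ^ 2 := integral_indicator_const _ hAmeas
    calc a ^ 2 * ((Q.tilted fun y => u * y) A).toReal
        = ∫ y, A.indicator (fun _ => a ^ 2) y ∂(Q.tilted fun y => u * y) := by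
          rw [hind, smul_eq_mul, mul_comm]
      _ ≤ ∫ y, (y - m) ^ 2 ∂(Q.tilted fun y => u * y) := by
          refine integral_mono ((integrable_const (a^2)).indicator hAmeas) h_int_sq ?_
          intro y
          simp only
          by_cases hy : y ∈ A
          · rw [Set.indicator_of_mem hy]
            obtain ⟨hy1, hy2⟩ := hy
            nlinarith
          · rw [Set.indicator_of_notMem hy]
            exact sq_nonneg _
  have step2 : exp (-u * b) / M * η ≤ ((Q.tilted fun y => u * y) A).toReal := by
    rw [tilted_apply_eq_ofReal_integral _ A, ← hM_def,
      ENNReal.toReal_ofReal (setIntegral_nonneg hAmeas fun y _ => by positivity)]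
    calc exp (-u * b) / M * η ≤ exp (-u * b) / M * (Q A).toReal := by
          have : (0:ℝ) ≤ exp (-u * b) / M := by positivity
          exact mul_le_mul_of_nonneg_left hmass this
      _ = ∫ _ in A, exp (-u * b) / M ∂Q := by rw [setIntegral_const, smul_eq_mul, mul_comm]; rfl
      _ ≤ ∫ y in A, exp (u * y) / M ∂Q := by
          refine setIntegral_mono_on
            (integrableOn_const (measure_lt_top Q A).ne)
            (hIu.div_const M).integrableOn hAmeas ?_
          intro y hy
          obtain ⟨hy1, _⟩ := hy
          have : -u * b ≤ u * y := by nlinarith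
          gcongr
  calc a ^ 2 * η * Real.exp (-u * b) / M = a ^ 2 * (exp (-u * b) / M * η) := by ring
    _ ≤ a ^ 2 * ((Q.tilted fun y => u * y) A).toReal :=
        mul_le_mul_of_nonneg_left step2 (sq_nonneg a)
    _ ≤ variance (fun y : ℝ => y) (Q.tilted fun y => u * y) := step1
end

section
/- Let Q be a centered distribution with P(Y ≥ t) ≤ C₁·exp(−c₁t) for all t ≥ 0 (Y ∼ Q). Then for all 0 ≤ u < c₁ and t ≥ 0, the tilted distribution satisfies Q_u((t, ∞)) ≤ (C₁e / M_Q(u)) · e^{−(c₁−u)t} · (1 + u/(c₁−u)). -/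
open MeasureTheory Real

/-- Decomposition of `(t,∞)` into intervals of width `h`. -/
lemma ioi_eq_iUnion_ioc (t h : ℝ) (hh : 0 < h) :
    Set.Ioi t = ⋃ n : ℕ, Set.Ioc (t + n * h) (t + (n + 1) * h) := by
  ext y
  simp only [Set.mem_Ioi, Set.mem_iUnion, Set.mem_Ioc]
  constructor
  · intro hy
    have hpos : 0 < (y - t) / h := div_pos (by linarith) hh
    have hm : 1 ≤ ⌈(y - t) / h⌉₊ := Nat.one_le_ceil_iff.mpr hpos
    refine ⟨⌈(y - t) / h⌉₊ - 1, ?_, ?_⟩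
    · have hlt : ((⌈(y - t) / h⌉₊ - 1 : ℕ) : ℝ) < (y - t) / h :=
        Nat.lt_ceil.mp (by omega)
      have := (lt_div_iff₀ hh).mp hlt
      linarith
    · have hle : (y - t) / h ≤ (⌈(y - t) / h⌉₊ : ℝ) := Nat.le_ceil _
      have hcast : ((⌈(y - t) / h⌉₊ - 1 : ℕ) : ℝ) + 1 = (⌈(y - t) / h⌉₊ : ℝ) := by
        push_cast [Nat.cast_sub hm]; ring
      rw [hcast]
      have := (div_le_iff₀ hh).mp hle
      linarith
  · rintro ⟨n, hn1, _⟩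
    have : (0 : ℝ) ≤ n * h := by positivity
    linarith

/-- The key tail estimate on the untilted exponential integral, for `0 < u < c₁`. -/
lemma key_tail (Q : Measure ℝ) [IsProbabilityMeasure Q]
    (C₁ c₁ : ℝ) (hC₁ : 0 < C₁) (hc₁ : 0 < c₁)
    (htail : ∀ t : ℝ, 0 ≤ t → (Q {y : ℝ | t ≤ y}).toReal ≤ C₁ * Real.exp (-c₁ * t))
    (u t : ℝ) (hu : 0 < u) (huc : u < c₁) (ht : 0 ≤ t) :
    ∫⁻ y in Set.Ioi t, ENNReal.ofReal (Real.exp (u * y)) ∂Q ≤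
      ENNReal.ofReal (C₁ * Real.exp 1 * Real.exp (-(c₁ - u) * t) * (1 + u / (c₁ - u))) := by
  set a : ℝ := c₁ - u with ha_def
  have ha : 0 < a := by simp [ha_def]; linarith
  have hui : 0 < u⁻¹ := inv_pos.mpr hu
  set r : ℝ := Real.exp (-(a * u⁻¹)) with hr_def
  have hr0 : 0 < r := Real.exp_pos _
  have hr1 : r < 1 := by
    rw [hr_def, Real.exp_lt_one_iff]
    have : 0 < a * u⁻¹ := by positivity
    linarith
  set K : ℝ := C₁ * Real.exp 1 * Real.exp (-a * t) with hK_def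
  have hK0 : 0 ≤ K := by positivity
  -- per-interval bound
  have hterm : ∀ n : ℕ,
      ∫⁻ y in Set.Ioc (t + n * u⁻¹) (t + (n + 1) * u⁻¹), ENNReal.ofReal (Real.exp (u * y)) ∂Q ≤
        ENNReal.ofReal (K * r ^ n) := by
    intro n
    have h1 : ∫⁻ y in Set.Ioc (t + n * u⁻¹) (t + (n + 1) * u⁻¹),
        ENNReal.ofReal (Real.exp (u * y)) ∂Q ≤
        ENNReal.ofReal (Real.exp (u * (t + (n + 1) * u⁻¹))) *
          Q (Set.Ioc (t + n * u⁻¹) (t + (n + 1) * u⁻¹)) := by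
      rw [← setLIntegral_const]
      refine setLIntegral_mono measurable_const (fun y hy => ?_)
      exact ENNReal.ofReal_le_ofReal (Real.exp_le_exp.mpr
        (mul_le_mul_of_nonneg_left hy.2 hu.le))
    have h2 : Q (Set.Ioc (t + n * u⁻¹) (t + (n + 1) * u⁻¹)) ≤
        ENNReal.ofReal (C₁ * Real.exp (-c₁ * (t + n * u⁻¹))) := by
      have hsub : Set.Ioc (t + n * u⁻¹) (t + (n + 1) * u⁻¹) ⊆ {y : ℝ | t + n * u⁻¹ ≤ y} :=
        fun y hy => le_of_lt hy.1
      refine le_trans (measure_mono hsub) ?_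
      rw [← ENNReal.ofReal_toReal (measure_ne_top Q _)]
      exact ENNReal.ofReal_le_ofReal (htail _ (by positivity))
    refine le_trans h1 (le_trans (mul_le_mul_right h2 _) ?_)
    rw [← ENNReal.ofReal_mul (Real.exp_pos _).le]
    refine ENNReal.ofReal_le_ofReal (le_of_eq ?_)
    have hu' : u ≠ 0 := hu.ne'
    have hexp : u * (t + ((n : ℝ) + 1) * u⁻¹) + -c₁ * (t + (n : ℝ) * u⁻¹) =
        1 + -a * t + (n : ℝ) * -(a * u⁻¹) := by
      field_simp [ha_def]
      ring
    rw [hK_def, hr_def, ← Real.exp_nat_mul]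
    calc Real.exp (u * (t + ((n : ℝ) + 1) * u⁻¹)) * (C₁ * Real.exp (-c₁ * (t + (n : ℝ) * u⁻¹)))
        = C₁ * Real.exp (u * (t + ((n : ℝ) + 1) * u⁻¹) + -c₁ * (t + (n : ℝ) * u⁻¹)) := by
          rw [Real.exp_add]; ring
      _ = C₁ * Real.exp (1 + -a * t + (n : ℝ) * -(a * u⁻¹)) := by rw [hexp]
      _ = C₁ * Real.exp 1 * Real.exp (-a * t) * Real.exp ((n : ℝ) * -(a * u⁻¹)) := by
          rw [Real.exp_add, Real.exp_add]; ring
  -- assemble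
  calc ∫⁻ y in Set.Ioi t, ENNReal.ofReal (Real.exp (u * y)) ∂Q
      = ∫⁻ y in ⋃ n : ℕ, Set.Ioc (t + n * u⁻¹) (t + (n + 1) * u⁻¹),
          ENNReal.ofReal (Real.exp (u * y)) ∂Q := by
        rw [← ioi_eq_iUnion_ioc t u⁻¹ hui]
    _ ≤ ∑' n : ℕ, ∫⁻ y in Set.Ioc (t + n * u⁻¹) (t + (n + 1) * u⁻¹),
          ENNReal.ofReal (Real.exp (u * y)) ∂Q := lintegral_iUnion_le _ _
    _ ≤ ∑' n : ℕ, ENNReal.ofReal (K * r ^ n) := ENNReal.tsum_le_tsum hterm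
    _ = ENNReal.ofReal K * (1 - ENNReal.ofReal r)⁻¹ := by
        have : ∀ n : ℕ, ENNReal.ofReal (K * r ^ n) =
            ENNReal.ofReal K * ENNReal.ofReal r ^ n := by
          intro n
          rw [ENNReal.ofReal_mul hK0, ENNReal.ofReal_pow hr0.le]
        simp_rw [this]
        rw [ENNReal.tsum_mul_left, ENNReal.tsum_geometric]
    _ ≤ ENNReal.ofReal K * ENNReal.ofReal (1 + u / a) := by
        refine mul_le_mul_right ?_ _
        have h1r : 0 < 1 - r := by linarith
        rw [← ENNReal.ofReal_one, ← ENNReal.ofReal_sub _ hr0.le,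
          ← ENNReal.ofReal_inv_of_pos h1r]
        refine ENNReal.ofReal_le_ofReal ?_
        -- real inequality: (1 - r)⁻¹ ≤ 1 + u / a
        have hx : 0 < a * u⁻¹ := by positivity
        have hexp : a * u⁻¹ + 1 ≤ Real.exp (a * u⁻¹) := Real.add_one_le_exp _
        have hrle : r ≤ (a * u⁻¹ + 1)⁻¹ := by
          rw [hr_def, Real.exp_neg]
          exact inv_anti₀ (by linarith) hexp
        have hinv : (1 + u / a)⁻¹ ≤ 1 - r := by
          have heq : (1 + u / a)⁻¹ = 1 - (a * u⁻¹ + 1)⁻¹ := by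
            field_simp
            ring
          rw [heq]
          linarith
        calc (1 - r)⁻¹ ≤ ((1 + u / a)⁻¹)⁻¹ :=
              inv_anti₀ (by positivity) hinv
          _ = 1 + u / a := inv_inv _
    _ = ENNReal.ofReal (C₁ * Real.exp 1 * Real.exp (-(c₁ - u) * t) * (1 + u / (c₁ - u))) := by
        rw [← ENNReal.ofReal_mul hK0, hK_def, ha_def]

/-- upper bound on the right tail of the tilted distribution:
if `Q` is centered with `P(Y ≥ t) ≤ C₁ e^{-c₁ t}` then for `0 ≤ u < c₁` and `t ≥ 0`,
`Q_u((t,∞)) ≤ (C₁ e / M_Q(u)) e^{-(c₁-u)t} (1 + u/(c₁-u))`. -/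
theorem stmt_8 (Q : Measure ℝ) [IsProbabilityMeasure Q]
    (hint : Integrable (fun y : ℝ => y) Q)
    (hcent : ∫ y, y ∂Q = 0)
    (C₁ c₁ : ℝ) (hC₁ : 0 < C₁) (hc₁ : 0 < c₁)
    (htail : ∀ t : ℝ, 0 ≤ t → (Q {y : ℝ | t ≤ y}).toReal ≤ C₁ * Real.exp (-c₁ * t)) :
    ∀ u t : ℝ, 0 ≤ u → u < c₁ → 0 ≤ t →
      ((tilt Q u) (Set.Ioi t)).toReal ≤
        C₁ * Real.exp 1 / (∫ z, Real.exp (u * z) ∂Q) *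
          Real.exp (-(c₁ - u) * t) * (1 + u / (c₁ - u)) := by
  intro u t hu huc ht
  rcases eq_or_lt_of_le hu with hu0 | hu0
  · -- u = 0
    subst hu0
    have hM : (∫ z, Real.exp ((0 : ℝ) * z) ∂Q) = 1 := by
      simp [Real.exp_zero]
    rw [tilt, hM]
    simp only [zero_mul, Real.exp_zero, div_one, ENNReal.ofReal_one]
    rw [show (fun _ : ℝ => (1 : ENNReal)) = (1 : ℝ → ENNReal) from rfl,
      MeasureTheory.withDensity_one]
    have h1 : (Q (Set.Ioi t)).toReal ≤ C₁ * Real.exp (-c₁ * t) := by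
      refine le_trans ?_ (htail t ht)
      refine ENNReal.toReal_mono (measure_ne_top Q _) (measure_mono ?_)
      exact fun y hy => show t ≤ y from le_of_lt hy
    have he : (1 : ℝ) ≤ Real.exp 1 := by
      have := Real.add_one_le_exp (1 : ℝ); linarith
    have : C₁ * Real.exp (-c₁ * t) ≤ C₁ * Real.exp 1 * Real.exp (-(c₁ - 0) * t) * (1 + 0 / (c₁ - 0)) := by
      rw [zero_div, add_zero, mul_one, sub_zero]
      nlinarith [mul_nonneg (sub_nonneg.mpr he) (mul_nonneg hC₁.le (Real.exp_pos (-c₁ * t)).le)]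
    linarith
  · -- u > 0
    by_cases hInt : Integrable (fun z : ℝ => Real.exp (u * z)) Q
    · have hM : 0 < ∫ z, Real.exp (u * z) ∂Q := by
        rw [integral_pos_iff_support_of_nonneg (fun z => (Real.exp_pos _).le) hInt]
        have : Function.support (fun z : ℝ => Real.exp (u * z)) = Set.univ := by
          ext z; simp [Function.support, Real.exp_ne_zero]
        rw [this]
        simp
      set M : ℝ := ∫ z, Real.exp (u * z) ∂Q with hM_def
      have ha : 0 < c₁ - u := by linarith
      have hrhs0 : 0 ≤ C₁ * Real.exp 1 / M * Real.exp (-(c₁ - u) * t) * (1 + u / (c₁ - u)) := by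
        positivity
      refine ENNReal.toReal_le_of_le_ofReal hrhs0 ?_
      rw [tilt, MeasureTheory.withDensity_apply _ measurableSet_Ioi]
      have hdens : ∀ y : ℝ, ENNReal.ofReal (Real.exp (u * y) / M) =
          ENNReal.ofReal (Real.exp (u * y)) * ENNReal.ofReal M⁻¹ := by
        intro y
        rw [div_eq_mul_inv, ENNReal.ofReal_mul (Real.exp_pos _).le]
      simp_rw [← hM_def, hdens]
      rw [lintegral_mul_const' _ _ ENNReal.ofReal_ne_top]
      have hrhseq : C₁ * Real.exp 1 / M * Real.exp (-(c₁ - u) * t) * (1 + u / (c₁ - u)) =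
          (C₁ * Real.exp 1 * Real.exp (-(c₁ - u) * t) * (1 + u / (c₁ - u))) * M⁻¹ := by
        field_simp
      rw [hrhseq, ENNReal.ofReal_mul (by positivity)]
      exact mul_le_mul_left (key_tail Q C₁ c₁ hC₁ hc₁ htail u t hu0 huc ht) _
    · -- not integrable: M = 0, both sides are 0
      rw [integral_undef hInt]
      simp only [div_zero, ENNReal.ofReal_zero]
      rw [tilt, integral_undef hInt]
      simp only [div_zero, ENNReal.ofReal_zero]
      rw [show (fun _ : ℝ => (0 : ENNReal)) = (0 : ℝ → ENNReal) from rfl,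
        MeasureTheory.withDensity_zero]
      simp
end

section
/- Let Q be a centered distribution with positive variance satisfying P(Y ≥ t) ≤ C₁·exp(−c₁t) for all t ≥ 0. Set c₀ = c₁·C₁·e. Then for all 0 ≤ u < c₁, the mean of the tilted distribution satisfies 0 ≤ μ(u) ≤ c₀/(c₁−u)². -/
open MeasureTheory Real ProbabilityTheory

open Set ENNReal NNReal


lemma key_lintegral (Q : Measure ℝ) [IsProbabilityMeasure Q]
    (C₁ c₁ : ℝ) (hC₁ : 0 < C₁) (hc₁ : 0 < c₁)
    (htail : ∀ t : ℝ, 0 ≤ t → (Q {y : ℝ | t ≤ y}).toReal ≤ C₁ * Real.exp (-c₁ * t))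
    (l : ℝ) (hl : 0 < l) (hlc : l < c₁) :
    ∫⁻ y, ENNReal.ofReal (if 0 ≤ y then Real.exp (l * y) else 0) ∂Q
      ≤ ENNReal.ofReal (C₁ * c₁ / (c₁ - l)) := by
  set g : ℝ → ℝ := fun y => if 0 ≤ y then Real.exp (l * y) else 0 with hg
  have g_nn : 0 ≤ᵐ[Q] g := Filter.Eventually.of_forall fun y => by
    by_cases h : 0 ≤ y <;> simp [hg, h, Real.exp_nonneg]
  have g_mble : Measurable g :=
    Measurable.ite (measurableSet_le measurable_const measurable_id)
      (by fun_prop) measurable_const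
  rw [lintegral_eq_lintegral_meas_lt Q g_nn g_mble.aemeasurable]
  set p : ℝ := c₁ / l with hp
  have hp1 : 1 < p := (one_lt_div hl).2 hlc
  set h : ℝ → ℝ := fun t => C₁ * (max t 1) ^ (-p) with hh
  have hQtail : ∀ t : ℝ, 0 ≤ t → Q {y : ℝ | t ≤ y} ≤ ENNReal.ofReal (C₁ * Real.exp (-c₁ * t)) := by
    intro t ht
    rw [← ENNReal.ofReal_toReal (measure_ne_top Q _)]
    exact ENNReal.ofReal_le_ofReal (htail t ht)
  have step1 : ∫⁻ t in Ioi (0:ℝ), Q {a : ℝ | t < g a}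
      ≤ ∫⁻ t in Ioi (0:ℝ), ENNReal.ofReal (h t) := by
    apply setLIntegral_mono' measurableSet_Ioi
    intro t ht
    simp only [mem_Ioi] at ht
    by_cases h1 : t ≤ 1
    · have : {a : ℝ | t < g a} ⊆ {y : ℝ | (0:ℝ) ≤ y} := by
        intro y hy
        simp only [mem_setOf_eq, hg] at hy ⊢
        by_contra hc
        simp [hc] at hy
        linarith
      refine le_trans (measure_mono this) ?_
      refine le_trans (hQtail 0 le_rfl) (ENNReal.ofReal_le_ofReal ?_)
      simp only [hh, max_eq_right h1, Real.one_rpow, neg_zero, mul_zero, Real.exp_zero, mul_one]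
      exact le_rfl
    · push_neg at h1
      have : {a : ℝ | t < g a} ⊆ {y : ℝ | Real.log t / l ≤ y} := by
        intro y hy
        simp only [mem_setOf_eq, hg] at hy ⊢
        by_cases hc : 0 ≤ y
        · simp only [hc, if_pos] at hy
          rw [div_le_iff₀ hl] at *
          have := (Real.log_lt_log_iff (by linarith) (Real.exp_pos _)).2 hy
          rw [Real.log_exp] at this
          linarith [this]
        · simp [hc] at hy; linarith
      refine le_trans (measure_mono this) ?_
      have hlog : 0 ≤ Real.log t / l := div_nonneg (Real.log_nonneg h1.le) hl.le
      refine le_trans (hQtail _ hlog) (ENNReal.ofReal_le_ofReal ?_)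
      have : Real.exp (-c₁ * (Real.log t / l)) = t ^ (-p) := by
        rw [Real.rpow_def_of_pos (by linarith)]
        rw [hp]; ring_nf
      rw [this, hh]
      simp [max_eq_left h1.le]
  refine le_trans step1 ?_
  have h_nn : 0 ≤ᵐ[volume.restrict (Ioi (0:ℝ))] h := by
    refine Filter.Eventually.of_forall fun t => ?_
    exact mul_nonneg hC₁.le (Real.rpow_nonneg (le_trans zero_le_one (le_max_right t 1)) _)
  have h_int : IntegrableOn h (Ioi (0:ℝ)) := by
    have : Ioi (0:ℝ) = Ioc 0 1 ∪ Ioi 1 := (Ioc_union_Ioi_eq_Ioi zero_le_one).symm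
    rw [this]
    apply IntegrableOn.union
    · apply Integrable.mono' (integrable_const C₁) ?_ ?_
      · exact ((continuous_const.mul ((continuous_id.max continuous_const).rpow_const
          (fun t => Or.inl (by positivity)))).aestronglyMeasurable)
      · refine Filter.Eventually.of_forall fun t => ?_
        rw [Real.norm_eq_abs, abs_of_nonneg (mul_nonneg hC₁.le (Real.rpow_nonneg (by positivity) _))]
        have h1 : (1:ℝ) ≤ max t 1 := le_max_right t 1
        calc C₁ * (max t 1) ^ (-p) ≤ C₁ * 1 :=
              mul_le_mul_of_nonneg_left
                (Real.rpow_le_one_of_one_le_of_nonpos h1 (by linarith)) hC₁.le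
            _ = C₁ := mul_one C₁
    · apply Integrable.congr ((integrableOn_Ioi_rpow_of_lt (by linarith : -p < -1) zero_lt_one).const_mul C₁)
      refine (ae_restrict_iff' measurableSet_Ioi).2 (Filter.Eventually.of_forall fun t ht => ?_)
      simp only [mem_Ioi] at ht
      simp [hh, max_eq_left ht.le]
  rw [← ofReal_integral_eq_lintegral_ofReal h_int h_nn]
  apply ENNReal.ofReal_le_ofReal
  have hsplit : Ioi (0:ℝ) = Ioc 0 1 ∪ Ioi 1 := (Ioc_union_Ioi_eq_Ioi zero_le_one).symm
  rw [hsplit, setIntegral_union (by simp [Set.disjoint_left]) measurableSet_Ioi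
    (h_int.mono_set (hsplit ▸ subset_union_left)) (h_int.mono_set (hsplit ▸ subset_union_right))]
  have ea : ∫ t in Ioc (0:ℝ) 1, h t = C₁ := by
    rw [setIntegral_congr_fun measurableSet_Ioc (g := fun _ => C₁) ?_]
    · simp
    · intro t ht
      simp [hh, max_eq_right ht.2]
  have e2 : ∫ t in Ioi (1:ℝ), h t = C₁ * (1 / (p - 1)) := by
    rw [setIntegral_congr_fun measurableSet_Ioi (g := fun t => C₁ * t ^ (-p)) ?_]
    · rw [integral_const_mul, integral_Ioi_rpow_of_lt (by linarith) zero_lt_one]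
      rw [Real.one_rpow, show -p + 1 = -(p-1) from by ring, div_neg, neg_div, neg_neg, one_div]
    · intro t ht
      simp only [mem_Ioi] at ht
      simp [hh, max_eq_left ht.le]
  rw [ea, e2]
  have hlne : c₁ - l ≠ 0 := by linarith
  have : p - 1 = (c₁ - l) / l := by rw [hp, div_sub_one hl.ne']
  rw [this, one_div_div]
  have hpos : (0:ℝ) < c₁ - l := by linarith
  have heq : C₁ + C₁ * (l / (c₁ - l)) = C₁ * c₁ / (c₁ - l) := by
    field_simp
    ring
  rw [heq]

open ProbabilityTheory

lemma g_integrable (Q : Measure ℝ) [IsProbabilityMeasure Q]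
    (C₁ c₁ : ℝ) (hC₁ : 0 < C₁) (hc₁ : 0 < c₁)
    (htail : ∀ t : ℝ, 0 ≤ t → (Q {y : ℝ | t ≤ y}).toReal ≤ C₁ * Real.exp (-c₁ * t))
    (l : ℝ) (hl : 0 < l) (hlc : l < c₁) :
    Integrable (fun y : ℝ => if 0 ≤ y then Real.exp (l * y) else 0) Q := by
  set g : ℝ → ℝ := fun y => if 0 ≤ y then Real.exp (l * y) else 0 with hg
  have g_nn : ∀ y, 0 ≤ g y := fun y => by
    by_cases h : 0 ≤ y <;> simp [hg, h, Real.exp_nonneg]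
  have g_mble : Measurable g :=
    Measurable.ite (measurableSet_le measurable_const measurable_id)
      (by fun_prop) measurable_const
  refine ⟨g_mble.aestronglyMeasurable, ?_⟩
  rw [HasFiniteIntegral]
  have : ∀ y, (‖g y‖₊ : ℝ≥0∞) = ENNReal.ofReal (g y) := fun y => by
    rw [← enorm_eq_nnnorm, ← ofReal_norm, Real.norm_eq_abs, abs_of_nonneg (g_nn y)]
  calc ∫⁻ y, (‖g y‖₊ : ℝ≥0∞) ∂Q = ∫⁻ y, ENNReal.ofReal (g y) ∂Q := lintegral_congr this
    _ ≤ ENNReal.ofReal (C₁ * c₁ / (c₁ - l)) :=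
        key_lintegral Q C₁ c₁ hC₁ hc₁ htail l hl hlc
    _ < ⊤ := ENNReal.ofReal_lt_top

lemma g_integral_le (Q : Measure ℝ) [IsProbabilityMeasure Q]
    (C₁ c₁ : ℝ) (hC₁ : 0 < C₁) (hc₁ : 0 < c₁)
    (htail : ∀ t : ℝ, 0 ≤ t → (Q {y : ℝ | t ≤ y}).toReal ≤ C₁ * Real.exp (-c₁ * t))
    (l : ℝ) (hl : 0 < l) (hlc : l < c₁) :
    ∫ y, (if 0 ≤ y then Real.exp (l * y) else 0) ∂Q ≤ C₁ * c₁ / (c₁ - l) := by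
  set g : ℝ → ℝ := fun y => if 0 ≤ y then Real.exp (l * y) else 0 with hg
  have g_nn : 0 ≤ᵐ[Q] g := Filter.Eventually.of_forall fun y => by
    by_cases h : 0 ≤ y <;> simp [hg, h, Real.exp_nonneg]
  have g_mble : Measurable g :=
    Measurable.ite (measurableSet_le measurable_const measurable_id)
      (by fun_prop) measurable_const
  rw [integral_eq_lintegral_of_nonneg_ae g_nn g_mble.aestronglyMeasurable]
  exact ENNReal.toReal_le_of_le_ofReal
    (div_nonneg (by positivity) (by linarith))
    (key_lintegral Q C₁ c₁ hC₁ hc₁ htail l hl hlc)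

set_option maxHeartbeats 1000000 in
theorem stmt_10' (Q : Measure ℝ) [IsProbabilityMeasure Q]
    (hint : Integrable (fun y : ℝ => y) Q)
    (hcent : ∫ y, y ∂Q = 0)
    (h2 : MemLp (fun y : ℝ => y) 2 Q)
    (hvar : 0 < variance (fun y : ℝ => y) Q)
    (C₁ c₁ : ℝ) (hC₁ : 0 < C₁) (hc₁ : 0 < c₁)
    (htail : ∀ t : ℝ, 0 ≤ t → (Q {y : ℝ | t ≤ y}).toReal ≤ C₁ * Real.exp (-c₁ * t)) :
    ∀ u : ℝ, 0 ≤ u → u < c₁ →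
      0 ≤ ∫ y, y ∂(Q.withDensity (fun y => ENNReal.ofReal (Real.exp (u * y) / ∫ z, Real.exp (u * z) ∂Q))) ∧
      ∫ y, y ∂(Q.withDensity (fun y => ENNReal.ofReal (Real.exp (u * y) / ∫ z, Real.exp (u * z) ∂Q))) ≤ c₁ * C₁ * Real.exp 1 / (c₁ - u) ^ 2 := by
  intro u hu huc
  set ε : ℝ := (c₁ - u) / 2 with hε
  have hεpos : 0 < ε := by simp only [hε]; linarith
  set l : ℝ := u + ε with hldef
  have hl : 0 < l := by simp only [hldef]; linarith
  have hlc : l < c₁ := by simp only [hldef, hε]; linarith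
  have hεl : c₁ - l = ε := by simp only [hldef, hε]; ring
  set g : ℝ → ℝ := fun y => if 0 ≤ y then Real.exp (l * y) else 0 with hg
  have g_nn : ∀ y, 0 ≤ g y := fun y => by
    by_cases h : 0 ≤ y <;> simp [hg, h, Real.exp_nonneg]
  have hgint : Integrable g Q := g_integrable Q C₁ c₁ hC₁ hc₁ htail l hl hlc
  have hgle : ∫ y, g y ∂Q ≤ C₁ * c₁ / (c₁ - l) :=
    g_integral_le Q C₁ c₁ hC₁ hc₁ htail l hl hlc
  have he1pos : 0 < Real.exp 1 := Real.exp_pos 1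
  -- integrability of exp(u y)
  have hexp_int : Integrable (fun y : ℝ => Real.exp (u * y)) Q := by
    apply Integrable.mono' ((integrable_const (1:ℝ)).add hgint)
      ((Real.measurable_exp.comp (measurable_id.const_mul u)).aestronglyMeasurable)
    refine Filter.Eventually.of_forall fun y => ?_
    simp only [Function.comp_apply, Pi.add_apply, id_eq]
    rw [Real.norm_eq_abs, abs_of_nonneg (Real.exp_nonneg _)]
    by_cases h : 0 ≤ y
    · have : Real.exp (u * y) ≤ Real.exp (l * y) :=
        Real.exp_le_exp.2 (mul_le_mul_of_nonneg_right (by simp [hldef]; linarith) h)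
      simp only [hg, h, if_pos]
      linarith
    · have : Real.exp (u * y) ≤ 1 := by
        rw [← Real.exp_zero]
        apply Real.exp_le_exp.2
        push_neg at h
        nlinarith
      simp only [hg, h, if_neg, not_false_iff]
      linarith [g_nn y, this]
  set M : ℝ := ∫ z, Real.exp (u * z) ∂Q with hM
  have hM1 : 1 ≤ M := by
    have hpt : ∀ y : ℝ, 1 + u * y ≤ Real.exp (u * y) := fun y => by
      linarith [Real.add_one_le_exp (u * y)]
    have hle : ∫ y, (1 + u * y) ∂Q ≤ M :=
      integral_mono (f := fun y => 1 + u * y)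
        ((integrable_const 1).add (hint.const_mul u)) hexp_int hpt
    rw [integral_add (integrable_const 1) (hint.const_mul u), integral_const_mul, hcent] at hle
    simpa using hle
  have hMpos : 0 < M := lt_of_lt_of_le one_pos hM1
  -- key pointwise bound
  have hpt : ∀ y : ℝ, y * Real.exp (u * y) ≤ 1 / (ε * (Real.exp 1)) * g y := by
    intro y
    by_cases h : 0 ≤ y
    · have h1 : ε * y ≤ Real.exp (ε * y - 1) := by
        linarith [Real.add_one_le_exp (ε * y - 1)]
      have h2 : y ≤ Real.exp (ε * y) / (ε * (Real.exp 1)) := by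
        rw [Real.exp_sub] at h1
        rw [le_div_iff₀ (by positivity)]
        calc y * (ε * Real.exp 1) = ε * y * Real.exp 1 := by ring
          _ ≤ Real.exp (ε * y) / Real.exp 1 * Real.exp 1 :=
              mul_le_mul_of_nonneg_right h1 (Real.exp_nonneg 1)
          _ = Real.exp (ε * y) := by field_simp
      simp only [hg, h, if_pos]
      calc y * Real.exp (u * y) ≤ Real.exp (ε * y) / (ε * (Real.exp 1)) * Real.exp (u * y) :=
            mul_le_mul_of_nonneg_right h2 (Real.exp_nonneg _)
        _ = 1 / (ε * (Real.exp 1)) * Real.exp (l * y) := by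
            rw [hldef, show (u + ε) * y = ε * y + u * y from by ring, Real.exp_add]
            field_simp
    · push_neg at h
      simp only [hg, if_neg (not_le.2 h), mul_zero]
      have := Real.exp_pos (u * y)
      nlinarith
  have hyeint : Integrable (fun y : ℝ => y * Real.exp (u * y)) Q := by
    apply Integrable.mono' (hint.abs.add (hgint.const_mul (1 / (ε * (Real.exp 1)))))
      ((measurable_id.mul (Real.measurable_exp.comp (measurable_id.const_mul u))).aestronglyMeasurable)
    refine Filter.Eventually.of_forall fun y => ?_
    simp only [Function.comp_apply, Pi.add_apply, Pi.mul_apply, id_eq]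
    rw [Real.norm_eq_abs, abs_mul, abs_of_nonneg (Real.exp_nonneg _)]
    by_cases h : 0 ≤ y
    · rw [abs_of_nonneg h]
      have := hpt y
      have hge : (0:ℝ) ≤ 1 / (ε * (Real.exp 1)) * g y := by positivity
      nlinarith [abs_nonneg y, le_abs_self y]
    · push_neg at h
      have hexple : Real.exp (u * y) ≤ 1 := by
        rw [← Real.exp_zero]; exact Real.exp_le_exp.2 (by nlinarith)
      have : |y| * Real.exp (u * y) ≤ |y| := by
        nlinarith [abs_nonneg y, Real.exp_pos (u * y)]
      have hge : (0:ℝ) ≤ 1 / (ε * (Real.exp 1)) * g y := by positivity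
      linarith
  set I : ℝ := ∫ y, y * Real.exp (u * y) ∂Q with hI
  have hI0 : 0 ≤ I := by
    have hpt2 : ∀ y : ℝ, y ≤ y * Real.exp (u * y) := by
      intro y
      rcases le_or_gt 0 y with h | h
      · nlinarith [Real.add_one_le_exp (u * y), mul_nonneg hu h]
      · have : Real.exp (u * y) ≤ 1 := by
          rw [← Real.exp_zero]; exact Real.exp_le_exp.2 (by nlinarith)
        nlinarith [Real.exp_pos (u * y)]
    have := integral_mono hint hyeint hpt2
    rw [hcent] at this
    exact this
  have hIub : I ≤ 1 / (ε * (Real.exp 1)) * (C₁ * c₁ / (c₁ - l)) := by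
    calc I ≤ ∫ y, 1 / (ε * (Real.exp 1)) * g y ∂Q :=
          integral_mono hyeint (hgint.const_mul _) hpt
      _ = 1 / (ε * (Real.exp 1)) * ∫ y, g y ∂Q := integral_const_mul _ _
      _ ≤ 1 / (ε * (Real.exp 1)) * (C₁ * c₁ / (c₁ - l)) := by
          apply mul_le_mul_of_nonneg_left hgle (by positivity)
  -- compute the tilted integral
  have htilt : ∫ y, y ∂(Q.withDensity (fun y => ENNReal.ofReal (Real.exp (u * y) / M))) = (1 / M) * I := by
    have hmeas : Measurable fun y : ℝ => (Real.exp (u * y) / M).toNNReal :=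
      (Measurable.div (by fun_prop) measurable_const).real_toNNReal
    have hd : (fun y : ℝ => ENNReal.ofReal (Real.exp (u * y) / M))
        = fun y : ℝ => ((Real.exp (u * y) / M).toNNReal : ℝ≥0∞) := rfl
    rw [hd, integral_withDensity_eq_integral_smul hmeas]
    have : ∀ y : ℝ, (Real.exp (u * y) / M).toNNReal • y = (1 / M) * (y * Real.exp (u * y)) := by
      intro y
      rw [NNReal.smul_def, smul_eq_mul, Real.coe_toNNReal _ (by positivity)]
      field_simp
    rw [integral_congr_ae (Filter.Eventually.of_forall this), integral_const_mul]
  constructor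
  · rw [htilt]
    exact mul_nonneg (by positivity) hI0
  · rw [htilt]
    have h1 : (1 / M) * I ≤ I := by
      apply mul_le_of_le_one_left hI0
      rw [div_le_one hMpos]; exact hM1
    refine le_trans h1 (le_trans hIub ?_)
    rw [hεl]
    have hd2 : c₁ - u = 2 * ε := by simp only [hε]; ring
    rw [hd2]
    have heq : 1 / (ε * (Real.exp 1)) * (C₁ * c₁ / ε) = C₁ * c₁ / ((Real.exp 1) * ε ^ 2) := by
      field_simp
    rw [heq, div_le_div_iff₀ (by positivity) (by positivity)]
    clear_value ε l M I
    clear hpt hgle hgint g_nn hg hIub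
    have hegt : (2 : ℝ) < Real.exp 1 := by
      calc (2:ℝ) < 2.7182818283 := by norm_num
        _ < Real.exp 1 := Real.exp_one_gt_d9
    set E : ℝ := Real.exp 1 with hE
    clear_value E
    have h4 : (4:ℝ) ≤ E * E := by nlinarith
    calc C₁ * c₁ * (2 * ε) ^ 2 = 4 * (C₁ * c₁ * ε ^ 2) := by ring
      _ ≤ (E * E) * (C₁ * c₁ * ε ^ 2) :=
          mul_le_mul_of_nonneg_right h4 (by positivity)
      _ = c₁ * C₁ * E * (E * ε ^ 2) := by ring


/-- if `Q` is centered with positive variance and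
`P(Y ≥ t) ≤ C₁ e^{-c₁ t}`, then with `c₀ = c₁ C₁ e`, for all `0 ≤ u < c₁` the mean
of the tilted distribution satisfies `0 ≤ μ(u) ≤ c₀ / (c₁ - u)²`. -/
theorem stmt_10 (Q : Measure ℝ) [IsProbabilityMeasure Q]
    (hint : Integrable (fun y : ℝ => y) Q)
    (hcent : ∫ y, y ∂Q = 0)
    (h2 : MemLp (fun y : ℝ => y) 2 Q)
    (hvar : 0 < variance (fun y : ℝ => y) Q)
    (C₁ c₁ : ℝ) (hC₁ : 0 < C₁) (hc₁ : 0 < c₁)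
    (htail : ∀ t : ℝ, 0 ≤ t → (Q {y : ℝ | t ≤ y}).toReal ≤ C₁ * Real.exp (-c₁ * t)) :
    ∀ u : ℝ, 0 ≤ u → u < c₁ →
      0 ≤ ∫ y, y ∂(tilt Q u) ∧
      ∫ y, y ∂(tilt Q u) ≤ c₁ * C₁ * Real.exp 1 / (c₁ - u) ^ 2 := by
  intro u hu huc
  unfold tilt
  exact stmt_10' Q hint hcent h2 hvar C₁ c₁ hC₁ hc₁ htail u hu huc
end

section
/- Let Q be a centered distribution satisfying the two-sided subgaussian tail bound P(|Y| ≥ t) ≤ C·exp(−ct²/2) for all t ≥ 0. Then for all u ≥ 0 and all t ≥ (4/c + 1)u + 4/c, the tilted distribution satisfies Q_u((t, ∞)) ≤ (C(1 + √(π/c))/M_Q(u)) · e^{−ct²/4}. -/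
open MeasureTheory Real
open scoped ENNReal

lemma key_bound (Q : Measure ℝ) [IsProbabilityMeasure Q]
    (C c : ℝ) (hC : 0 < C) (hc : 0 < c)
    (htail : ∀ s : ℝ, 0 ≤ s →
      (Q {y : ℝ | s ≤ |y|}).toReal ≤ C * Real.exp (-c * s ^ 2 / 2))
    (u t : ℝ) (hu : 0 ≤ u) (ht : (4 / c + 1) * u + 4 / c ≤ t) :
    ∫⁻ y in Set.Ioi t, ENNReal.ofReal (Real.exp (u * y)) ∂Q ≤
      ENNReal.ofReal (C * (1 + Real.sqrt (Real.pi / c)) * Real.exp (-c * t ^ 2 / 4)) := by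
  have ht0 : 0 < t := by
    have h4c : 0 < 4 / c := by positivity
    nlinarith [mul_nonneg (le_of_lt h4c) hu]
  have h1 : (4 + c) * u + 4 ≤ c * t := by
    have h := mul_le_mul_of_nonneg_left ht hc.le
    have e : c * ((4 / c + 1) * u + 4 / c) = (4 + c) * u + 4 := by
      field_simp
    rw [e] at h
    linarith
  have hct4 : u + 1 ≤ c * t / 4 := by nlinarith [mul_nonneg hc.le hu]
  have hut : u ≤ t := by
    have h4c : 0 ≤ 4 / c := by positivity
    nlinarith [mul_nonneg h4c hu]
  -- tail in ENNReal form
  have htail' : ∀ s : ℝ, 0 ≤ s → Q (Set.Ici s) ≤ ENNReal.ofReal (C * Real.exp (-c * s ^ 2 / 2)) := by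
    intro s hs
    have hsub : Set.Ici s ⊆ {y : ℝ | s ≤ |y|} := by
      intro y hy
      exact le_trans hy (le_abs_self y)
    refine le_trans (measure_mono hsub) ?_
    rw [ENNReal.le_ofReal_iff_toReal_le (measure_ne_top _ _) (by positivity)]
    exact htail s hs
  set G : ℝ → ℝ≥0∞ := fun s => ENNReal.ofReal (u * Real.exp (u * s)) with hG
  set f : ℝ → ℝ → ℝ≥0∞ := fun y s => (Set.Ioc t y).indicator G s with hf
  -- Step A : pointwise decomposition
  have stepA : ∀ y ∈ Set.Ioi t, ENNReal.ofReal (Real.exp (u * y)) =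
      ENNReal.ofReal (Real.exp (u * t)) + ∫⁻ s in Set.Ioi t, f y s ∂volume := by
    intro y hy
    have hty : t ≤ y := (Set.mem_Ioi.mp hy).le
    have hcont : Continuous fun s : ℝ => u * Real.exp (u * s) := by continuity
    have hderiv : ∀ s ∈ Set.uIcc t y, HasDerivAt (fun s => Real.exp (u * s)) (u * Real.exp (u * s)) s := by
      intro s _
      have h := (Real.hasDerivAt_exp (u * s)).comp s ((hasDerivAt_id s).const_mul u)
      exact h.congr_deriv (by ring)
    have hFTC : ∫ s in t..y, u * Real.exp (u * s) = Real.exp (u * y) - Real.exp (u * t) :=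
      intervalIntegral.integral_eq_sub_of_hasDerivAt hderiv (hcont.intervalIntegrable t y)
    have hset : ∫ s in Set.Ioc t y, u * Real.exp (u * s) = Real.exp (u * y) - Real.exp (u * t) := by
      rw [← intervalIntegral.integral_of_le hty]; exact hFTC
    have hIntOn : IntegrableOn (fun s => u * Real.exp (u * s)) (Set.Ioc t y) volume :=
      (intervalIntegrable_iff_integrableOn_Ioc_of_le hty).mp (hcont.intervalIntegrable t y)
    have hnn : 0 ≤ᶠ[ae (volume.restrict (Set.Ioc t y))] fun s => u * Real.exp (u * s) :=
      Filter.Eventually.of_forall fun s => by positivity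
    have hofReal : ENNReal.ofReal (∫ s in Set.Ioc t y, u * Real.exp (u * s)) =
        ∫⁻ s in Set.Ioc t y, G s ∂volume :=
      ofReal_integral_eq_lintegral_ofReal hIntOn hnn
    have hrestrict : ∫⁻ s in Set.Ioi t, f y s ∂volume = ∫⁻ s in Set.Ioc t y, G s ∂volume := by
      rw [hf]
      rw [lintegral_indicator measurableSet_Ioc, Measure.restrict_restrict measurableSet_Ioc,
        Set.inter_eq_left.mpr Set.Ioc_subset_Ioi_self]
    rw [hrestrict, ← hofReal, hset, ← ENNReal.ofReal_add (Real.exp_pos _).le (by linarith [Real.exp_le_exp.mpr (mul_le_mul_of_nonneg_left hty hu)])]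
    congr 1; ring
  -- measurability of uncurry f for Fubini
  have hmeas : AEMeasurable (Function.uncurry f)
      ((Q.restrict (Set.Ioi t)).prod (volume.restrict (Set.Ioi t))) := by
    have heq : Function.uncurry f =
        Set.indicator {p : ℝ × ℝ | t < p.2 ∧ p.2 ≤ p.1}
          (fun p => ENNReal.ofReal (u * Real.exp (u * p.2))) := by
      funext p
      rcases p with ⟨y, s⟩
      simp [Function.uncurry, hf, Set.indicator_apply, Set.mem_Ioc, Set.mem_setOf_eq, hG]
    rw [heq]
    refine (Measurable.indicator ?_ ?_).aemeasurable
    · exact (ENNReal.measurable_ofReal.comp ((measurable_const.mul (Real.measurable_exp.comp (measurable_const.mul measurable_snd)))))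
    · exact (measurableSet_lt measurable_const measurable_snd).inter
        (measurableSet_le measurable_snd measurable_fst)
  -- T1 bound
  have hQt : Q (Set.Ioi t) ≤ ENNReal.ofReal (C * Real.exp (-c * t ^ 2 / 2)) := by
    refine le_trans (measure_mono (Set.Ioi_subset_Ici_self)) (htail' t ht0.le)
  have hT1 : ENNReal.ofReal (Real.exp (u * t)) * Q (Set.Ioi t) ≤
      ENNReal.ofReal (C * Real.exp (-c * t ^ 2 / 4)) := by
    refine le_trans (mul_le_mul_right hQt _) ?_
    rw [← ENNReal.ofReal_mul (Real.exp_pos _).le]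
    apply ENNReal.ofReal_le_ofReal
    have hexp : Real.exp (u * t) * Real.exp (-c * t ^ 2 / 2) = Real.exp (u * t + -c * t ^ 2 / 2) := by
      rw [← Real.exp_add]
    have hexple : u * t + -c * t ^ 2 / 2 ≤ -c * t ^ 2 / 4 := by
      nlinarith [mul_nonneg ht0.le (by linarith : (0:ℝ) ≤ c * t / 4 - u)]
    calc Real.exp (u * t) * (C * Real.exp (-c * t ^ 2 / 2))
        = C * (Real.exp (u * t) * Real.exp (-c * t ^ 2 / 2)) := by ring
      _ = C * Real.exp (u * t + -c * t ^ 2 / 2) := by rw [hexp]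
      _ ≤ C * Real.exp (-c * t ^ 2 / 4) := by
          exact mul_le_mul_of_nonneg_left (Real.exp_le_exp.mpr hexple) hC.le
  -- T2 bound
  have hT2 : ∫⁻ s in Set.Ioi t, ∫⁻ y in Set.Ioi t, f y s ∂Q ∂volume ≤
      ENNReal.ofReal (C * Real.sqrt (Real.pi / c) * Real.exp (-c * t ^ 2 / 4)) := by
    have step1 : ∫⁻ s in Set.Ioi t, ∫⁻ y in Set.Ioi t, f y s ∂Q ∂volume ≤
        ∫⁻ s in Set.Ioi t, ENNReal.ofReal (u * C * Real.exp (-c * t ^ 2 / 4 - t)) *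
          ENNReal.ofReal (Real.exp (-(c / 2) * (s - t) ^ 2)) ∂volume := by
      refine setLIntegral_mono ?_ ?_
      · exact (measurable_const.mul (ENNReal.measurable_ofReal.comp
          (Real.measurable_exp.comp (((measurable_id.sub measurable_const).pow_const 2).const_mul _))))
      · intro s hs
        have hts : t < s := Set.mem_Ioi.mp hs
        have hs0 : 0 ≤ s := le_trans ht0.le hts.le
        have e1 : ∫⁻ y in Set.Ioi t, f y s ∂Q ≤ G s * Q (Set.Ici s) := by
          calc ∫⁻ y in Set.Ioi t, f y s ∂Q
              ≤ ∫⁻ y in Set.Ioi t, (Set.Ici s).indicator (fun _ => G s) y ∂Q := by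
                refine lintegral_mono fun y => ?_
                by_cases h : s ∈ Set.Ioc t y
                · have : y ∈ Set.Ici s := h.2
                  simp [hf, Set.indicator_of_mem h, Set.indicator_of_mem this]
                · simp [hf, Set.indicator_of_notMem h]
            _ ≤ ∫⁻ y, (Set.Ici s).indicator (fun _ => G s) y ∂Q :=
                setLIntegral_le_lintegral _ _
            _ = G s * Q (Set.Ici s) := lintegral_indicator_const measurableSet_Ici _
        refine le_trans e1 ?_
        refine le_trans (mul_le_mul_right (htail' s hs0) _) ?_
        rw [hG, ← ENNReal.ofReal_mul (by positivity), ← ENNReal.ofReal_mul (by positivity)]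
        apply ENNReal.ofReal_le_ofReal
        have hexp1 : u * Real.exp (u * s) * (C * Real.exp (-c * s ^ 2 / 2)) =
            u * C * Real.exp (u * s + -c * s ^ 2 / 2) := by
          rw [Real.exp_add]; ring
        have hexp2 : u * C * Real.exp (-c * t ^ 2 / 4 - t) * Real.exp (-(c / 2) * (s - t) ^ 2) =
            u * C * Real.exp (-c * t ^ 2 / 4 - t + -(c / 2) * (s - t) ^ 2) := by
          rw [Real.exp_add]; ring
        rw [hexp1, hexp2]
        refine mul_le_mul_of_nonneg_left (Real.exp_le_exp.mpr ?_) (by positivity)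
        nlinarith [mul_nonneg ht0.le (by linarith : (0:ℝ) ≤ c * t / 4 - u - 1),
          mul_nonneg (by linarith : (0:ℝ) ≤ s - t) (by nlinarith : (0:ℝ) ≤ c * t - u)]
    refine le_trans step1 ?_
    rw [lintegral_const_mul' _ _ ENNReal.ofReal_ne_top]
    have hgauss : ∫⁻ s in Set.Ioi t, ENNReal.ofReal (Real.exp (-(c / 2) * (s - t) ^ 2)) ∂volume ≤
        ENNReal.ofReal (Real.sqrt 2 * Real.sqrt (Real.pi / c)) := by
      refine le_trans (setLIntegral_le_lintegral _ _) ?_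
      have hint : Integrable (fun s : ℝ => Real.exp (-(c / 2) * (s - t) ^ 2)) volume :=
        (integrable_exp_neg_mul_sq (half_pos hc)).comp_sub_right t
      rw [← ofReal_integral_eq_lintegral_ofReal hint
        (Filter.Eventually.of_forall fun s => (Real.exp_pos _).le)]
      apply ENNReal.ofReal_le_ofReal
      have : ∫ s : ℝ, Real.exp (-(c / 2) * (s - t) ^ 2) =
          ∫ s : ℝ, Real.exp (-(c / 2) * s ^ 2) :=
        integral_sub_right_eq_self (fun v => Real.exp (-(c / 2) * v ^ 2)) t
      rw [this, integral_gaussian]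
      have he : Real.pi / (c / 2) = 2 * (Real.pi / c) := by field_simp
      rw [he, Real.sqrt_mul (by norm_num : (0:ℝ) ≤ 2)]
    refine le_trans (mul_le_mul_right hgauss _) ?_
    rw [← ENNReal.ofReal_mul (by positivity)]
    apply ENNReal.ofReal_le_ofReal
    -- real inequality
    have h2e : (2:ℝ) ≤ Real.exp 1 := by
      have := Real.add_one_le_exp 1; linarith
    have hs2 : Real.sqrt 2 ≤ 1.5 := by
      have h := Real.sqrt_le_sqrt (by norm_num : (2:ℝ) ≤ 1.5 ^ 2)
      rwa [Real.sqrt_sq (by norm_num : (0:ℝ) ≤ 1.5)] at h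
    have hkey : u * Real.exp (-t) * Real.sqrt 2 ≤ 1 := by
      have h1' : u * Real.exp (-t) ≤ u * Real.exp (-u) :=
        mul_le_mul_of_nonneg_left (Real.exp_le_exp.mpr (by linarith)) hu
      have h2' : u * Real.exp (-u) ≤ Real.exp (-1) := by
        have hue : u ≤ Real.exp (u - 1) := by
          have := Real.add_one_le_exp (u - 1); linarith
        calc u * Real.exp (-u) ≤ Real.exp (u - 1) * Real.exp (-u) :=
              mul_le_mul_of_nonneg_right hue (Real.exp_pos _).le
          _ = Real.exp (-1) := by rw [← Real.exp_add]; ring_nf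
      have h4' : Real.exp (-1) ≤ 1 / 2 := by
        rw [Real.exp_neg]
        rw [inv_le_comm₀ (Real.exp_pos 1) (by norm_num)]
        linarith
      have hnn1 : 0 ≤ u * Real.exp (-t) := by positivity
      nlinarith [Real.sqrt_nonneg 2]
    have e0 : 0 ≤ C * Real.sqrt (Real.pi / c) * Real.exp (-c * t ^ 2 / 4) := by positivity
    calc u * C * Real.exp (-c * t ^ 2 / 4 - t) * (Real.sqrt 2 * Real.sqrt (Real.pi / c))
        = C * Real.sqrt (Real.pi / c) * Real.exp (-c * t ^ 2 / 4) *
            (u * Real.exp (-t) * Real.sqrt 2) := by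
          rw [show -c * t ^ 2 / 4 - t = -c * t ^ 2 / 4 + -t by ring, Real.exp_add]; ring
      _ ≤ C * Real.sqrt (Real.pi / c) * Real.exp (-c * t ^ 2 / 4) * 1 :=
          mul_le_mul_of_nonneg_left hkey e0
      _ = C * Real.sqrt (Real.pi / c) * Real.exp (-c * t ^ 2 / 4) := mul_one _
  -- assemble
  calc ∫⁻ y in Set.Ioi t, ENNReal.ofReal (Real.exp (u * y)) ∂Q
      = ∫⁻ y in Set.Ioi t, (ENNReal.ofReal (Real.exp (u * t)) + ∫⁻ s in Set.Ioi t, f y s ∂volume) ∂Q :=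
        setLIntegral_congr_fun measurableSet_Ioi stepA
    _ = ENNReal.ofReal (Real.exp (u * t)) * Q (Set.Ioi t) +
        ∫⁻ y in Set.Ioi t, ∫⁻ s in Set.Ioi t, f y s ∂volume ∂Q := by
        rw [lintegral_add_left measurable_const, setLIntegral_const]
    _ = ENNReal.ofReal (Real.exp (u * t)) * Q (Set.Ioi t) +
        ∫⁻ s in Set.Ioi t, ∫⁻ y in Set.Ioi t, f y s ∂Q ∂volume := by
        rw [lintegral_lintegral_swap hmeas]
    _ ≤ ENNReal.ofReal (C * Real.exp (-c * t ^ 2 / 4)) +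
        ENNReal.ofReal (C * Real.sqrt (Real.pi / c) * Real.exp (-c * t ^ 2 / 4)) :=
        add_le_add hT1 hT2
    _ = ENNReal.ofReal (C * (1 + Real.sqrt (Real.pi / c)) * Real.exp (-c * t ^ 2 / 4)) := by
        rw [← ENNReal.ofReal_add (by positivity) (by positivity)]
        congr 1; ring

/-- if `Q` is centered with subgaussian tail
`P(|Y| ≥ t) ≤ C e^{-c t²/2}`, then for `u ≥ 0` and `t ≥ (4/c + 1) u + 4/c`,
`Q_u((t,∞)) ≤ (C (1 + √(π/c)) / M_Q(u)) e^{-c t²/4}`. -/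
theorem stmt_11 (Q : Measure ℝ) [IsProbabilityMeasure Q]
    (hint : Integrable (fun y : ℝ => y) Q)
    (hcent : ∫ y, y ∂Q = 0)
    (C c : ℝ) (hC : 0 < C) (hc : 0 < c)
    (htail : ∀ t : ℝ, 0 ≤ t →
      (Q {y : ℝ | t ≤ |y|}).toReal ≤ C * Real.exp (-c * t ^ 2 / 2)) :
    ∀ u t : ℝ, 0 ≤ u → (4 / c + 1) * u + 4 / c ≤ t →
      ((tilt Q u) (Set.Ioi t)).toReal ≤
        C * (1 + Real.sqrt (Real.pi / c)) / (∫ z, Real.exp (u * z) ∂Q) *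
          Real.exp (-c * t ^ 2 / 4) := by
  intro u t hu ht
  set t₀ : ℝ := (4 / c + 1) * u + 4 / c with ht₀
  have ht₀0 : 0 ≤ t₀ := by positivity
  -- integrability of exp (u z)
  have hcontE : Continuous fun z : ℝ => Real.exp (u * z) := by continuity
  have hexp_int : Integrable (fun z => Real.exp (u * z)) Q := by
    refine ⟨hcontE.aestronglyMeasurable, ?_⟩
    rw [hasFiniteIntegral_iff_ofReal (Filter.Eventually.of_forall fun z => (Real.exp_pos _).le)]
    rw [← lintegral_add_compl (fun z => ENNReal.ofReal (Real.exp (u * z)))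
      (measurableSet_Iic (a := t₀)), Set.compl_Iic]
    have hA : ∫⁻ z in Set.Iic t₀, ENNReal.ofReal (Real.exp (u * z)) ∂Q ≤
        ENNReal.ofReal (Real.exp (u * t₀)) := by
      calc ∫⁻ z in Set.Iic t₀, ENNReal.ofReal (Real.exp (u * z)) ∂Q
          ≤ ∫⁻ _ in Set.Iic t₀, ENNReal.ofReal (Real.exp (u * t₀)) ∂Q := by
            refine setLIntegral_mono measurable_const fun z hz => ?_
            exact ENNReal.ofReal_le_ofReal (Real.exp_le_exp.mpr
              (mul_le_mul_of_nonneg_left (Set.mem_Iic.mp hz) hu))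
        _ = ENNReal.ofReal (Real.exp (u * t₀)) * Q (Set.Iic t₀) := setLIntegral_const _ _
        _ ≤ ENNReal.ofReal (Real.exp (u * t₀)) * 1 := mul_le_mul_right prob_le_one _
        _ = ENNReal.ofReal (Real.exp (u * t₀)) := mul_one _
    have hB := key_bound Q C c hC hc htail u t₀ hu le_rfl
    exact ENNReal.add_lt_top.mpr ⟨lt_of_le_of_lt hA ENNReal.ofReal_lt_top,
      lt_of_le_of_lt hB ENNReal.ofReal_lt_top⟩
  set M : ℝ := ∫ z, Real.exp (u * z) ∂Q with hM
  have hM1 : 1 ≤ M := by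
    have hint2 : Integrable (fun z : ℝ => 1 + u * z) Q :=
      (integrable_const 1).add (hint.const_mul u)
    have h0 : ∫ z, (1 + u * z) ∂Q = 1 := by
      rw [integral_add (integrable_const 1) (hint.const_mul u), integral_const,
        integral_const_mul, hcent]
      simp
    calc (1:ℝ) = ∫ z, (1 + u * z) ∂Q := h0.symm
      _ ≤ M := integral_mono hint2 hexp_int fun z => by
          have := Real.add_one_le_exp (u * z); linarith
  have hMpos : 0 < M := lt_of_lt_of_le one_pos hM1
  set B : ℝ := C * (1 + Real.sqrt (Real.pi / c)) * Real.exp (-c * t ^ 2 / 4) with hB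
  have hBnn : 0 ≤ B := by positivity
  have htilt : (tilt Q u) (Set.Ioi t) ≤ ENNReal.ofReal (B / M) := by
    rw [tilt, withDensity_apply _ measurableSet_Ioi]
    have heq : ∀ y : ℝ, ENNReal.ofReal (Real.exp (u * y) / M) =
        ENNReal.ofReal (Real.exp (u * y)) * (ENNReal.ofReal M)⁻¹ := fun y => by
      rw [ENNReal.ofReal_div_of_pos hMpos, div_eq_mul_inv]
    simp_rw [← hM, heq]
    have hinvne : (ENNReal.ofReal M)⁻¹ ≠ ⊤ := by
      simp only [ne_eq, ENNReal.inv_eq_top]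
      exact (ENNReal.ofReal_pos.mpr hMpos).ne'
    rw [lintegral_mul_const' _ _ hinvne]
    calc (∫⁻ y in Set.Ioi t, ENNReal.ofReal (Real.exp (u * y)) ∂Q) * (ENNReal.ofReal M)⁻¹
        ≤ ENNReal.ofReal B * (ENNReal.ofReal M)⁻¹ :=
          mul_le_mul_left (key_bound Q C c hC hc htail u t hu ht) _
      _ = ENNReal.ofReal (B / M) := by
          rw [ENNReal.ofReal_div_of_pos hMpos, div_eq_mul_inv]
  have hfin := ENNReal.toReal_le_of_le_ofReal (by positivity) htilt
  refine le_trans hfin (le_of_eq ?_)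
  rw [hB]; ring
end

section
/- Let Q be a centered distribution satisfying P(|Y| ≥ t) ≤ C·exp(−ct²/2) for all t ≥ 0. Then for all u ≥ 0, the mean of the tilted distribution satisfies 0 ≤ μ(u) ≤ (4/c + 1)u + 4/c + (√π/√c)·C(1 + √(π/c))·e^{−4u²/c}. -/
open MeasureTheory Real

open Set
open scoped ENNReal NNReal

-- shifted gaussian integrable
lemma aux_gauss_shift {b : ℝ} (hb : 0 < b) (d : ℝ) :
    Integrable (fun t : ℝ => Real.exp (-b * (t - d) ^ 2)) := by
  exact (integrable_exp_neg_mul_sq hb).comp_sub_right d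

lemma aux_exp_lin_quad (C lam c : ℝ) (hc : 0 < c) :
    Integrable (fun t : ℝ => C * Real.exp (-c * t ^ 2 / 2) * (lam * Real.exp (lam * t))) := by
  have h : (fun t : ℝ => C * Real.exp (-c * t ^ 2 / 2) * (lam * Real.exp (lam * t)))
      = fun t => (C * lam * Real.exp (lam ^ 2 / (2 * c))) *
          Real.exp (-(c/2) * (t - lam / c) ^ 2) := by
    funext t
    have e1 : C * Real.exp (-c * t ^ 2 / 2) * (lam * Real.exp (lam * t))
        = (C * lam) * Real.exp (-c * t ^ 2 / 2 + lam * t) := by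
      rw [Real.exp_add]; ring
    have e2 : -c * t ^ 2 / 2 + lam * t = lam ^ 2 / (2 * c) + (-(c/2) * (t - lam / c) ^ 2) := by
      field_simp; ring
    rw [e1, e2, Real.exp_add]; ring
  rw [h]
  exact (aux_gauss_shift (by linarith : (0:ℝ) < c/2) (lam / c)).const_mul _

lemma aux_mul_gauss_Ioi {b : ℝ} (hb : 0 < b) :
    ∫ r in Ioi (0:ℝ), r * Real.exp (-b * r ^ 2) = (2*b)⁻¹ := by
  have hderiv : ∀ x ∈ Ioi (0:ℝ),
      HasDerivAt (fun r : ℝ => -(2*b)⁻¹ * Real.exp (-b * r ^ 2)) (x * Real.exp (-b * x ^ 2)) x := by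
    intro x _
    have h1 : HasDerivAt (fun r : ℝ => -b * r ^ 2) (-b * (2*x)) x := by
      simpa using ((hasDerivAt_pow 2 x).const_mul (-b))
    have h2 := (Real.hasDerivAt_exp (-b * x ^ 2)).comp x h1
    have h3 := h2.const_mul (-(2*b)⁻¹)
    refine h3.congr_deriv ?_
    field_simp
  have hcont : ContinuousOn (fun r : ℝ => -(2*b)⁻¹ * Real.exp (-b * r ^ 2)) (Ici 0) :=
    (continuous_const.mul (Real.continuous_exp.comp (continuous_const.mul (continuous_pow 2)))).continuousOn
  have htend : Filter.Tendsto (fun r : ℝ => -(2*b)⁻¹ * Real.exp (-b * r ^ 2)) Filter.atTop (nhds 0) := by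
    have : Filter.Tendsto (fun r : ℝ => -b * r ^ 2) Filter.atTop Filter.atBot := by
      apply Filter.Tendsto.const_mul_atTop_of_neg (by linarith : -b < 0)
      exact Filter.tendsto_pow_atTop (by norm_num)
    simpa using (Real.tendsto_exp_atBot.comp this).const_mul (-(2*b)⁻¹)
  have := MeasureTheory.integral_Ioi_of_hasDerivAt_of_tendsto (hcont.continuousWithinAt (self_mem_Ici)) hderiv
    ((integrable_mul_exp_neg_mul_sq hb).integrableOn) htend
  rw [this]
  simp

-- layer cake upper bound
lemma aux_layercake_le (Q : Measure ℝ) [IsProbabilityMeasure Q]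
    (f : ℝ → ℝ) (hfm : Measurable f) (hf0 : ∀ y, 0 ≤ f y)
    (g : ℝ → ℝ) (hgc : Continuous g) (hg0 : ∀ t, 0 ≤ t → 0 ≤ g t)
    (G : ℝ → ℝ) (hG : ∀ x, 0 ≤ x → (∫ t in (0:ℝ)..x, g t) = G x)
    (h : ℝ → ℝ) (hh : IntegrableOn h (Ioi 0) volume)
    (hb : ∀ t, 0 < t → (Q {y | t ≤ f y}).toReal * g t ≤ h t) :
    ∫⁻ y, ENNReal.ofReal (G (f y)) ∂Q ≤ ENNReal.ofReal (∫ t in Ioi (0:ℝ), h t) := by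
  have key := lintegral_comp_eq_lintegral_meas_le_mul Q (Filter.Eventually.of_forall hf0)
    hfm.aemeasurable (fun t _ => hgc.intervalIntegrable 0 t)
    ((ae_restrict_mem measurableSet_Ioi).mono fun t ht => hg0 t (le_of_lt ht))
  have e1 : ∫⁻ y, ENNReal.ofReal (G (f y)) ∂Q
      = ∫⁻ y, ENNReal.ofReal (∫ t in (0:ℝ)..f y, g t) ∂Q := by
    apply lintegral_congr; intro y; rw [hG _ (hf0 y)]
  rw [e1, key]
  have h2 : ∫⁻ t in Ioi (0:ℝ), Q {y | t ≤ f y} * ENNReal.ofReal (g t)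
      ≤ ∫⁻ t in Ioi (0:ℝ), ENNReal.ofReal (h t) := by
    apply setLIntegral_mono' measurableSet_Ioi
    intro t ht
    have hq : Q {y | t ≤ f y} = ENNReal.ofReal ((Q {y | t ≤ f y}).toReal) := by
      rw [ENNReal.ofReal_toReal (measure_ne_top Q _)]
    rw [hq, ← ENNReal.ofReal_mul ENNReal.toReal_nonneg]
    exact ENNReal.ofReal_le_ofReal (hb t ht)
  refine h2.trans ?_
  rw [← ofReal_integral_eq_lintegral_ofReal hh]
  filter_upwards [ae_restrict_mem measurableSet_Ioi] with t ht
  exact le_trans (mul_nonneg ENNReal.toReal_nonneg (hg0 t ht.le)) (hb t ht)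

set_option maxHeartbeats 1000000 in
/-- if `Q` is centered with subgaussian tail `P(|Y| ≥ t) ≤ C e^{-c t²/2}`,
then for all `u ≥ 0` the mean of the tilted distribution satisfies
`0 ≤ μ(u) ≤ (4/c + 1) u + 4/c + (√π/√c) C (1 + √(π/c)) e^{-4u²/c}`. -/
theorem stmt_12 (Q : Measure ℝ) [IsProbabilityMeasure Q]
    (hint : Integrable (fun y : ℝ => y) Q)
    (hcent : ∫ y, y ∂Q = 0)
    (C c : ℝ) (hC : 0 < C) (hc : 0 < c)
    (htail : ∀ t : ℝ, 0 ≤ t →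
      (Q {y : ℝ | t ≤ |y|}).toReal ≤ C * Real.exp (-c * t ^ 2 / 2)) :
    ∀ u : ℝ, 0 ≤ u →
      0 ≤ ∫ y, y ∂(tilt Q u) ∧
      ∫ y, y ∂(tilt Q u) ≤
        (4 / c + 1) * u + 4 / c +
          Real.sqrt Real.pi / Real.sqrt c * (C * (1 + Real.sqrt (Real.pi / c))) *
            Real.exp (-4 * u ^ 2 / c) := by
  intro u hu
  -- integrability of exp(lam * |y|)
  have int_exp_abs : ∀ lam : ℝ, 0 ≤ lam → Integrable (fun y : ℝ => Real.exp (lam * |y|)) Q := by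
    intro lam hlam
    have hfm : Measurable fun y : ℝ => |y| := continuous_abs.measurable
    have hgc : Continuous fun t : ℝ => lam * Real.exp (lam * t) :=
      continuous_const.mul (Real.continuous_exp.comp (continuous_const.mul continuous_id))
    have hG : ∀ x : ℝ, 0 ≤ x →
        (∫ t in (0:ℝ)..x, lam * Real.exp (lam * t)) = Real.exp (lam * x) - 1 := by
      intro x _
      have hderiv : ∀ t ∈ Set.uIcc (0:ℝ) x,
          HasDerivAt (fun s : ℝ => Real.exp (lam * s)) (lam * Real.exp (lam * t)) t := by
        intro t _
        have h1 : HasDerivAt (fun s : ℝ => lam * s) lam t := by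
          simpa using (hasDerivAt_id t).const_mul lam
        have := (Real.hasDerivAt_exp (lam * t)).comp t h1
        refine this.congr_deriv ?_; ring
      rw [intervalIntegral.integral_eq_sub_of_hasDerivAt hderiv (hgc.intervalIntegrable 0 x)]
      simp
    have key := aux_layercake_le Q (fun y => |y|) hfm (fun y => abs_nonneg y)
      (fun t => lam * Real.exp (lam * t)) hgc
      (fun t _ => mul_nonneg hlam (Real.exp_pos _).le)
      (fun x => Real.exp (lam * x) - 1) hG
      (fun t => C * Real.exp (-c * t ^ 2 / 2) * (lam * Real.exp (lam * t)))
      ((aux_exp_lin_quad C lam c hc).integrableOn)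
      (fun t ht => mul_le_mul_of_nonneg_right (htail t ht.le)
        (mul_nonneg hlam (Real.exp_pos _).le))
    refine ⟨(Real.continuous_exp.comp
      (continuous_const.mul continuous_abs)).aestronglyMeasurable, ?_⟩
    rw [hasFiniteIntegral_iff_ofReal (Filter.Eventually.of_forall fun y => (Real.exp_pos _).le)]
    have hsplit : ∀ y : ℝ, ENNReal.ofReal (Real.exp (lam * |y|))
        = ENNReal.ofReal (Real.exp (lam * |y|) - 1) + ENNReal.ofReal 1 := by
      intro y
      rw [← ENNReal.ofReal_add (by
        have : (1:ℝ) ≤ Real.exp (lam * |y|) :=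
          Real.one_le_exp (mul_nonneg hlam (abs_nonneg y))
        linarith) (by norm_num)]
      norm_num
    calc ∫⁻ y, ENNReal.ofReal (Real.exp (lam * |y|)) ∂Q
        = ∫⁻ y, (ENNReal.ofReal (Real.exp (lam * |y|) - 1) + ENNReal.ofReal 1) ∂Q := by
          exact lintegral_congr fun y => hsplit y
      _ = (∫⁻ y, ENNReal.ofReal (Real.exp (lam * |y|) - 1) ∂Q) + ENNReal.ofReal 1 := by
          rw [lintegral_add_right _ measurable_const, lintegral_const]
          simp
      _ < ⊤ := by
          apply ENNReal.add_lt_top.mpr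
          exact ⟨lt_of_le_of_lt key ENNReal.ofReal_lt_top, ENNReal.ofReal_lt_top⟩
  have int_exp : Integrable (fun y : ℝ => Real.exp (u * y)) Q := by
    refine (int_exp_abs u hu).mono' ((Real.continuous_exp.comp
      (continuous_const.mul continuous_id)).aestronglyMeasurable) ?_
    refine Filter.Eventually.of_forall fun y => ?_
    rw [Real.norm_eq_abs, abs_of_pos (Real.exp_pos _)]
    exact Real.exp_le_exp.mpr (mul_le_mul_of_nonneg_left (le_abs_self y) hu)
  have habs_le : ∀ y : ℝ, |y| * Real.exp (u * |y|) ≤ Real.exp ((u + 1) * |y|) := by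
    intro y
    have h1 : |y| ≤ Real.exp |y| := by
      have := Real.add_one_le_exp |y|; linarith
    calc |y| * Real.exp (u * |y|) ≤ Real.exp |y| * Real.exp (u * |y|) :=
          mul_le_mul_of_nonneg_right h1 (Real.exp_pos _).le
      _ = Real.exp ((u + 1) * |y|) := by rw [← Real.exp_add]; ring_nf
  have int_yexp : Integrable (fun y : ℝ => y * Real.exp (u * y)) Q := by
    refine (int_exp_abs (u + 1) (by linarith)).mono'
      ((continuous_id.mul (Real.continuous_exp.comp
        (continuous_const.mul continuous_id))).aestronglyMeasurable) ?_
    refine Filter.Eventually.of_forall fun y => ?_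
    rw [Real.norm_eq_abs, abs_mul, abs_of_pos (Real.exp_pos _)]
    calc |y| * Real.exp (u * y)
        ≤ |y| * Real.exp (u * |y|) := by
          apply mul_le_mul_of_nonneg_left _ (abs_nonneg y)
          exact Real.exp_le_exp.mpr (mul_le_mul_of_nonneg_left (le_abs_self y) hu)
      _ ≤ Real.exp ((u + 1) * |y|) := habs_le y
  set M := ∫ z, Real.exp (u * z) ∂Q with hMdef
  have hM1 : (1:ℝ) ≤ M := by
    have h1 : ∫ y, (1 + u * y) ∂Q = 1 := by
      rw [integral_add (integrable_const 1) (hint.const_mul u), integral_const,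
        integral_const_mul, hcent]
      simp
    rw [← h1]
    apply integral_mono (by exact (integrable_const 1).add (hint.const_mul u)) int_exp
    intro y
    have := Real.add_one_le_exp (u * y)
    simp only; linarith
  have hMpos : (0:ℝ) < M := lt_of_lt_of_le zero_lt_one hM1
  have tilt_eq : ∫ y, y ∂(tilt Q u) = M⁻¹ * ∫ y, y * Real.exp (u * y) ∂Q := by
    have hdm : Measurable fun y : ℝ => (Real.exp (u * y) / M).toNNReal :=
      (((Real.continuous_exp.comp (continuous_const.mul continuous_id)).measurable).div_const
        M).real_toNNReal
    have htilt : tilt Q u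
        = Q.withDensity (fun y => ((Real.exp (u * y) / M).toNNReal : ℝ≥0∞)) := rfl
    rw [htilt, integral_withDensity_eq_integral_smul hdm]
    have hpt : ∀ y : ℝ, (Real.exp (u * y) / M).toNNReal • y
        = M⁻¹ * (y * Real.exp (u * y)) := by
      intro y
      rw [NNReal.smul_def, smul_eq_mul, Real.coe_toNNReal _ (by positivity)]
      field_simp
    simp_rw [hpt]
    exact integral_const_mul _ _
  have hIpos : 0 ≤ ∫ y, y * Real.exp (u * y) ∂Q := by
    have h0 : ∫ y, (y * Real.exp (u * y) - y) ∂Q = ∫ y, y * Real.exp (u * y) ∂Q := by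
      rw [integral_sub int_yexp hint, hcent, sub_zero]
    rw [← h0]
    apply integral_nonneg
    intro y
    simp only [Pi.zero_apply]
    rcases le_or_gt 0 y with hy | hy
    · have h1 : (1:ℝ) ≤ Real.exp (u * y) := Real.one_le_exp (mul_nonneg hu hy)
      nlinarith
    · have h1 : Real.exp (u * y) ≤ 1 := by
        rw [← Real.exp_zero]
        exact Real.exp_le_exp.mpr (mul_nonpos_of_nonneg_of_nonpos hu hy.le)
      nlinarith
  constructor
  · rw [tilt_eq]
    exact mul_nonneg (inv_nonneg.mpr hMpos.le) hIpos
  · rw [tilt_eq]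
    obtain ⟨a, hadef⟩ : ∃ a : ℝ, a = (4 / c + 1) * u + 4 / c := ⟨_, rfl⟩
    rw [← hadef]
    have h4c : (0:ℝ) < 4 / c := by positivity
    have ha0 : 0 < a := by
      have : 0 ≤ (4 / c + 1) * u := mul_nonneg (by positivity) hu
      rw [hadef]; linarith
    have hca : c * a = (4 + c) * u + 4 := by
      rw [hadef]; field_simp
    have hua : 4 * u ≤ c * a := by nlinarith [mul_nonneg hc.le hu]
    obtain ⟨f, hfdef⟩ : ∃ f : ℝ → ℝ, f = fun y => max (y - a) 0 := ⟨_, rfl⟩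
    have hfm : Measurable f := by rw [hfdef]; exact (measurable_id.sub_const a).max measurable_const
    have hf0 : ∀ y, 0 ≤ f y := by rw [hfdef]; exact fun y => le_max_right _ _
    have hgc : Continuous fun t : ℝ => (1 + u * t) * Real.exp (u * t) :=
      (continuous_const.add (continuous_const.mul continuous_id)).mul
        (Real.continuous_exp.comp (continuous_const.mul continuous_id))
    have hG : ∀ x : ℝ, 0 ≤ x →
        (∫ t in (0:ℝ)..x, (1 + u * t) * Real.exp (u * t)) = x * Real.exp (u * x) := by
      intro x _
      have hderiv : ∀ t ∈ Set.uIcc (0:ℝ) x,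
          HasDerivAt (fun s : ℝ => s * Real.exp (u * s)) ((1 + u * t) * Real.exp (u * t)) t := by
        intro t _
        have h1 : HasDerivAt (fun s : ℝ => u * s) u t := by
          simpa using (hasDerivAt_id t).const_mul u
        have h2 := (Real.hasDerivAt_exp (u * t)).comp t h1
        have h3 := (hasDerivAt_id t).mul h2
        refine h3.congr_deriv ?_
        simp; ring
      rw [intervalIntegral.integral_eq_sub_of_hasDerivAt hderiv (hgc.intervalIntegrable 0 x)]
      simp
    obtain ⟨K, hKdef⟩ : ∃ K : ℝ, K = C * Real.exp (-(u * a) - c * a ^ 2 / 4) := ⟨_, rfl⟩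
    have hKpos : 0 < K := by rw [hKdef]; positivity
    have hb4 : (0:ℝ) < c / 4 := by positivity
    obtain ⟨h, hhdef⟩ : ∃ h : ℝ → ℝ, h = fun t => K * ((1 + u * t) * Real.exp (-(c / 4) * t ^ 2)) := ⟨_, rfl⟩
    have hhsplit : h = fun t => K * Real.exp (-(c / 4) * t ^ 2)
        + (K * u) * (t * Real.exp (-(c / 4) * t ^ 2)) := by
      funext t; rw [hhdef]; ring
    have hh : IntegrableOn h (Ioi 0) volume := by
      rw [hhsplit]
      exact (((integrable_exp_neg_mul_sq hb4).const_mul K).add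
        ((integrable_mul_exp_neg_mul_sq hb4).const_mul (K * u))).integrableOn
    have hb : ∀ t, 0 < t →
        (Q {y | t ≤ f y}).toReal * ((1 + u * t) * Real.exp (u * t)) ≤ h t := by
      intro t ht
      have hsub : {y : ℝ | t ≤ f y} ⊆ {y : ℝ | a + t ≤ |y|} := by
        intro y hy
        simp only [Set.mem_setOf_eq, hfdef] at hy ⊢
        rcases le_max_iff.mp hy with h1 | h1
        · linarith [le_abs_self y]
        · linarith
      have hq : (Q {y | t ≤ f y}).toReal ≤ C * Real.exp (-c * (a + t) ^ 2 / 2) :=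
        le_trans (ENNReal.toReal_mono (measure_ne_top Q _) (measure_mono hsub))
          (htail (a + t) (by linarith))
      have hut : 0 ≤ 1 + u * t := by nlinarith
      have hg0 : 0 ≤ (1 + u * t) * Real.exp (u * t) := mul_nonneg hut (Real.exp_pos _).le
      have hexp : Real.exp (-c * (a + t) ^ 2 / 2) * Real.exp (u * t)
          ≤ Real.exp (-(u * a) - c * a ^ 2 / 4) * Real.exp (-(c / 4) * t ^ 2) := by
        rw [← Real.exp_add, ← Real.exp_add]
        apply Real.exp_le_exp.mpr
        nlinarith [mul_le_mul_of_nonneg_right hua (show (0:ℝ) ≤ a + t by linarith),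
          mul_nonneg (mul_nonneg hc.le ha0.le) ht.le, mul_nonneg hc.le (sq_nonneg t)]
      calc (Q {y | t ≤ f y}).toReal * ((1 + u * t) * Real.exp (u * t))
          ≤ (C * Real.exp (-c * (a + t) ^ 2 / 2)) * ((1 + u * t) * Real.exp (u * t)) :=
            mul_le_mul_of_nonneg_right hq hg0
        _ = (C * (1 + u * t)) * (Real.exp (-c * (a + t) ^ 2 / 2) * Real.exp (u * t)) := by ring
        _ ≤ (C * (1 + u * t)) * (Real.exp (-(u * a) - c * a ^ 2 / 4)
              * Real.exp (-(c / 4) * t ^ 2)) := by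
            apply mul_le_mul_of_nonneg_left hexp (by positivity)
        _ = h t := by rw [hhdef, hKdef]; ring
    have hg0' : ∀ t : ℝ, 0 ≤ t → 0 ≤ (1 + u * t) * Real.exp (u * t) := by
      intro t ht
      have : (0:ℝ) ≤ 1 + u * t := by nlinarith
      positivity
    have key := aux_layercake_le Q f hfm hf0 (fun t => (1 + u * t) * Real.exp (u * t)) hgc
      hg0' (fun x => x * Real.exp (u * x)) hG h hh hb
    have hmeas_ff : AEStronglyMeasurable (fun y => f y * Real.exp (u * f y)) Q :=
      (hfm.mul (Real.measurable_exp.comp (hfm.const_mul u))).aestronglyMeasurable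
    have hh_nonneg : ∀ t ∈ Ioi (0:ℝ), 0 ≤ h t := by
      intro t ht
      simp only [mem_Ioi] at ht
      rw [hhdef]
      have h1 : (0:ℝ) ≤ 1 + u * t := by nlinarith
      have := hKpos
      positivity
    have hIbound : ∫ y, f y * Real.exp (u * y) ∂Q
        ≤ Real.exp (u * a) * ∫ t in Ioi (0:ℝ), h t := by
      have hpt : ∀ y : ℝ, f y * Real.exp (u * y)
          = Real.exp (u * a) * (f y * Real.exp (u * f y)) := by
        intro y
        rw [hfdef]
        simp only []
        rcases le_or_gt y a with hy | hy
        · rw [max_eq_right (by linarith)]; ring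
        · rw [max_eq_left (by linarith)]
          have e1 : Real.exp (u * a) * ((y - a) * Real.exp (u * (y - a)))
              = (y - a) * Real.exp (u * a + u * (y - a)) := by
            rw [Real.exp_add]; ring
          rw [e1, show u * a + u * (y - a) = u * y by ring]
      calc ∫ y, f y * Real.exp (u * y) ∂Q
          = Real.exp (u * a) * ∫ y, f y * Real.exp (u * f y) ∂Q := by
            simp_rw [hpt]; exact integral_const_mul _ _
        _ ≤ Real.exp (u * a) * ∫ t in Ioi (0:ℝ), h t := by
            apply mul_le_mul_of_nonneg_left _ (Real.exp_pos _).le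
            rw [integral_eq_lintegral_of_nonneg_ae (Filter.Eventually.of_forall
              fun y => mul_nonneg (hf0 y) (Real.exp_pos _).le) hmeas_ff]
            exact ENNReal.toReal_le_of_le_ofReal
              (setIntegral_nonneg measurableSet_Ioi hh_nonneg) key
    have hint_h : ∫ t in Ioi (0:ℝ), h t = K * Real.sqrt (π / c) + K * u * (2 / c) := by
      rw [hhsplit]
      rw [integral_add (((integrable_exp_neg_mul_sq hb4).const_mul K).integrableOn)
        (((integrable_mul_exp_neg_mul_sq hb4).const_mul (K * u)).integrableOn),
        integral_const_mul, integral_const_mul, integral_gaussian_Ioi, aux_mul_gauss_Ioi hb4]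
      congr 1
      · congr 1
        rw [show π / (c / 4) = 2 ^ 2 * (π / c) by field_simp; ring,
          Real.sqrt_mul (by norm_num) _, Real.sqrt_sq (by norm_num)]
        ring
      · rw [show ((2:ℝ) * (c / 4))⁻¹ = 2 / c by field_simp; ring]
    -- integrability of f y * exp (u y)
    have hmeas_fe : AEStronglyMeasurable (fun y => f y * Real.exp (u * y)) Q :=
      (hfm.mul (Real.measurable_exp.comp (measurable_id.const_mul u))).aestronglyMeasurable
    have hu1 : (0:ℝ) ≤ u + 1 := by linarith
    have int_f_exp : Integrable (fun y => f y * Real.exp (u * y)) Q := by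
      refine (int_exp_abs (u + 1) hu1).mono' hmeas_fe ?_
      refine Filter.Eventually.of_forall fun y => ?_
      rw [Real.norm_eq_abs, abs_mul, abs_of_pos (Real.exp_pos _),
        abs_of_nonneg (hf0 y)]
      have h1 : f y ≤ |y| := by
        rw [hfdef]
        simp only
        rcases le_or_gt y a with hy | hy
        · rw [max_eq_right (by linarith)]; exact abs_nonneg y
        · rw [max_eq_left (by linarith)]
          have := le_abs_self y; linarith
      calc f y * Real.exp (u * y) ≤ |y| * Real.exp (u * y) :=
            mul_le_mul_of_nonneg_right h1 (Real.exp_pos _).le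
        _ ≤ |y| * Real.exp (u * |y|) := by
            apply mul_le_mul_of_nonneg_left _ (abs_nonneg y)
            exact Real.exp_le_exp.mpr (mul_le_mul_of_nonneg_left (le_abs_self y) hu)
        _ ≤ Real.exp ((u + 1) * |y|) := habs_le y
    have hI0 : 0 ≤ ∫ y, f y * Real.exp (u * y) ∂Q :=
      integral_nonneg fun y => mul_nonneg (hf0 y) (Real.exp_pos _).le
    have hstep1 : ∫ y, y * Real.exp (u * y) ∂Q
        ≤ a * M + ∫ y, f y * Real.exp (u * y) ∂Q := by
      have hle : (fun y : ℝ => y * Real.exp (u * y))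
          ≤ fun y : ℝ => a * Real.exp (u * y) + f y * Real.exp (u * y) := by
        intro y
        simp only
        have h1 : y - a ≤ f y := by rw [hfdef]; exact le_max_left _ _
        nlinarith [Real.exp_pos (u * y)]
      have hmono : (∫ y, y * Real.exp (u * y) ∂Q)
          ≤ ∫ y, (a * Real.exp (u * y) + f y * Real.exp (u * y)) ∂Q :=
        integral_mono int_yexp ((int_exp.const_mul a).add int_f_exp) hle
      rw [integral_add (int_exp.const_mul a) int_f_exp, integral_const_mul] at hmono
      exact hmono
    -- exponential estimates
    have hquad : 4 * u ^ 2 / c + 2 * u ^ 2 ≤ c * a ^ 2 / 4 := by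
      have e1 : c * a ^ 2 / 4 = (c * a) ^ 2 / (4 * c) := by field_simp
      have e2 : 4 * u ^ 2 / c + 2 * u ^ 2 = (16 * u ^ 2 + 8 * c * u ^ 2) / (4 * c) := by
        field_simp; ring
      rw [e1, e2, hca, div_le_div_iff₀ (by positivity) (by positivity)]
      nlinarith [sq_nonneg (c * u), mul_nonneg hc.le hu, hu, hc.le]
    have hE : Real.exp (-(c * a ^ 2 / 4))
        ≤ Real.exp (-4 * u ^ 2 / c) * Real.exp (-(2 * u ^ 2)) := by
      rw [← Real.exp_add]
      apply Real.exp_le_exp.mpr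
      have : -4 * u ^ 2 / c = -(4 * u ^ 2 / c) := by ring
      linarith [hquad, this.le, this.ge]
    have h2u : 2 * u * Real.exp (-(2 * u ^ 2)) ≤ 1 := by
      have h3 : 2 * u ≤ Real.exp (2 * u ^ 2) := by
        nlinarith [Real.add_one_le_exp (2 * u ^ 2), sq_nonneg (2 * u - 1)]
      rw [Real.exp_neg]
      calc 2 * u * (Real.exp (2 * u ^ 2))⁻¹
          ≤ Real.exp (2 * u ^ 2) * (Real.exp (2 * u ^ 2))⁻¹ :=
            mul_le_mul_of_nonneg_right h3 (by positivity)
        _ = 1 := mul_inv_cancel₀ (Real.exp_ne_zero _)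
    have hexp2le : Real.exp (-(2 * u ^ 2)) ≤ 1 := by
      rw [← Real.exp_zero]
      apply Real.exp_le_exp.mpr
      nlinarith [sq_nonneg u]
    have hE4pos : (0:ℝ) < Real.exp (-4 * u ^ 2 / c) := Real.exp_pos _
    have hEle : Real.exp (-(c * a ^ 2 / 4)) ≤ Real.exp (-4 * u ^ 2 / c) := by
      refine le_trans hE ?_
      nlinarith [hexp2le, hE4pos.le]
    have hEK : Real.exp (u * a) * K = C * Real.exp (-(c * a ^ 2 / 4)) := by
      rw [hKdef, show Real.exp (u * a) * (C * Real.exp (-(u * a) - c * a ^ 2 / 4))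
        = C * (Real.exp (u * a) * Real.exp (-(u * a) - c * a ^ 2 / 4)) from by ring,
        ← Real.exp_add]
      congr 1
      ring
    have hsqrtdiv : Real.sqrt π / Real.sqrt c = Real.sqrt (π / c) :=
      (Real.sqrt_div Real.pi_pos.le c).symm
    have hs2 : Real.sqrt (π / c) * Real.sqrt (π / c) = π / c :=
      Real.mul_self_sqrt (by positivity)
    have hsq_nonneg : 0 ≤ Real.sqrt (π / c) := Real.sqrt_nonneg _
    -- term bounds
    have ht1 : C * Real.exp (-(c * a ^ 2 / 4)) * Real.sqrt (π / c)
        ≤ C * Real.sqrt (π / c) * Real.exp (-4 * u ^ 2 / c) := by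
      nlinarith [mul_le_mul_of_nonneg_left hEle (mul_nonneg hC.le hsq_nonneg)]
    have ht2 : C * Real.exp (-(c * a ^ 2 / 4)) * u * (2 / c)
        ≤ C * (π / c) * Real.exp (-4 * u ^ 2 / c) := by
      have hstep : Real.exp (-(c * a ^ 2 / 4)) * u
          ≤ Real.exp (-4 * u ^ 2 / c) * Real.exp (-(2 * u ^ 2)) * u :=
        mul_le_mul_of_nonneg_right hE hu
      have hpi1 : (1:ℝ) ≤ π := by nlinarith [Real.pi_gt_three]
      have h2u' : Real.exp (-(2 * u ^ 2)) * u * 2 ≤ 1 := by nlinarith [h2u]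
      calc C * Real.exp (-(c * a ^ 2 / 4)) * u * (2 / c)
          = (Real.exp (-(c * a ^ 2 / 4)) * u) * (2 * C / c) := by ring
        _ ≤ (Real.exp (-4 * u ^ 2 / c) * Real.exp (-(2 * u ^ 2)) * u) * (2 * C / c) :=
            mul_le_mul_of_nonneg_right hstep (by positivity)
        _ = (C * Real.exp (-4 * u ^ 2 / c) / c) * (Real.exp (-(2 * u ^ 2)) * u * 2) := by
            ring
        _ ≤ (C * Real.exp (-4 * u ^ 2 / c) / c) * 1 := by
            apply mul_le_mul_of_nonneg_left h2u' (by positivity)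
        _ ≤ C * (π / c) * Real.exp (-4 * u ^ 2 / c) := by
            rw [mul_one]
            rw [show C * Real.exp (-4 * u ^ 2 / c) / c
              = C * (1 / c) * Real.exp (-4 * u ^ 2 / c) from by ring]
            apply mul_le_mul_of_nonneg_right _ hE4pos.le
            apply mul_le_mul_of_nonneg_left _ hC.le
            rw [div_le_div_iff₀ hc hc]
            nlinarith [hpi1, hc]
    -- final assembly
    have hIfinal : ∫ y, f y * Real.exp (u * y) ∂Q
        ≤ C * Real.exp (-(c * a ^ 2 / 4)) * Real.sqrt (π / c)
          + C * Real.exp (-(c * a ^ 2 / 4)) * u * (2 / c) := by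
      refine le_trans hIbound ?_
      rw [hint_h]
      have e1 : Real.exp (u * a) * (K * Real.sqrt (π / c) + K * u * (2 / c))
          = (Real.exp (u * a) * K) * Real.sqrt (π / c)
            + (Real.exp (u * a) * K) * u * (2 / c) := by ring
      rw [e1, hEK]
    have hRHS : Real.sqrt π / Real.sqrt c * (C * (1 + Real.sqrt (π / c)))
          * Real.exp (-4 * u ^ 2 / c)
        = C * Real.sqrt (π / c) * Real.exp (-4 * u ^ 2 / c)
          + C * (π / c) * Real.exp (-4 * u ^ 2 / c) := by
      rw [hsqrtdiv]
      calc Real.sqrt (π / c) * (C * (1 + Real.sqrt (π / c))) * Real.exp (-4 * u ^ 2 / c)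
          = C * Real.sqrt (π / c) * Real.exp (-4 * u ^ 2 / c)
            + C * (Real.sqrt (π / c) * Real.sqrt (π / c)) * Real.exp (-4 * u ^ 2 / c) := by
            ring
        _ = _ := by rw [hs2]
    calc M⁻¹ * ∫ y, y * Real.exp (u * y) ∂Q
        ≤ M⁻¹ * (a * M + ∫ y, f y * Real.exp (u * y) ∂Q) :=
          mul_le_mul_of_nonneg_left hstep1 (inv_nonneg.mpr hMpos.le)
      _ = a + M⁻¹ * ∫ y, f y * Real.exp (u * y) ∂Q := by
          field_simp
      _ ≤ a + ∫ y, f y * Real.exp (u * y) ∂Q := by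
          have : M⁻¹ * ∫ y, f y * Real.exp (u * y) ∂Q ≤ 1 * ∫ y, f y * Real.exp (u * y) ∂Q :=
            mul_le_mul_of_nonneg_right (inv_le_one_of_one_le₀ hM1) hI0
          linarith
      _ ≤ a + (C * Real.exp (-(c * a ^ 2 / 4)) * Real.sqrt (π / c)
            + C * Real.exp (-(c * a ^ 2 / 4)) * u * (2 / c)) := by linarith [hIfinal]
      _ ≤ a + Real.sqrt π / Real.sqrt c * (C * (1 + Real.sqrt (π / c)))
            * Real.exp (-4 * u ^ 2 / c) := by
          rw [hRHS]
          linarith [ht1, ht2]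
end

section
/- Let μ be twice continuously differentiable on an interval 𝒰 with |μ''(u)| ≤ γ(u)·μ'(u) for all u ∈ 𝒰 and some γ: 𝒰 → ℝ₊ with K = sup_{u∈𝒰} γ(u) < ∞. Assume μ' is either identically zero or strictly positive on 𝒰. Then for any u, u' ∈ 𝒰, μ'(u') ≤ μ'(u)·e^{K|u−u'|}. -/
open Real

/-- self-concordance to smoothness: if `μ` is twice continuously
differentiable on an interval `𝒰`, `|μ''| ≤ γ μ'` on `𝒰`, `γ ≤ K` on `𝒰`, and `μ'`
is either identically zero or strictly positive on `𝒰`, then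
`μ'(u') ≤ μ'(u) e^{K |u - u'|}` for all `u, u' ∈ 𝒰`. -/
theorem stmt_13 (𝒰 : Set ℝ) (h𝒰 : 𝒰.OrdConnected)
    (μ γ : ℝ → ℝ) (hμ : ContDiffOn ℝ 2 μ 𝒰)
    (hγ : ∀ u ∈ 𝒰, 0 ≤ γ u)
    (hsc : ∀ u ∈ 𝒰, |deriv (deriv μ) u| ≤ γ u * deriv μ u)
    (K : ℝ) (hK : ∀ u ∈ 𝒰, γ u ≤ K)
    (hdich : (∀ u ∈ 𝒰, deriv μ u = 0) ∨ (∀ u ∈ 𝒰, 0 < deriv μ u)) :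
    ∀ u ∈ 𝒰, ∀ u' ∈ 𝒰, deriv μ u' ≤ deriv μ u * Real.exp (K * |u - u'|) := by
  intro u hu u' hu'
  have hKnn : 0 ≤ K := le_trans (hγ u hu) (hK u hu)
  rcases hdich with h0 | hpos
  · rw [h0 u hu, h0 u' hu', zero_mul]
  · -- key Grönwall-type estimate
    have key : ∀ x ∈ 𝒰, ∀ y ∈ 𝒰, x < y →
        |Real.log (deriv μ y) - Real.log (deriv μ x)| ≤ K * (y - x) := by
      intro x hx y hy hxy
      have hIcc : Set.Icc x y ⊆ 𝒰 := h𝒰.out hx hy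
      have hIoo : Set.Ioo x y ⊆ 𝒰 := fun z hz => hIcc ⟨le_of_lt hz.1, le_of_lt hz.2⟩
      have hconv : Convex ℝ 𝒰 := convex_iff_ordConnected.mpr h𝒰
      have hIooint : Set.Ioo x y ⊆ interior 𝒰 :=
        interior_maximal hIoo isOpen_Ioo
      have hne : (interior 𝒰).Nonempty :=
        ⟨(x + y) / 2, hIooint ⟨by linarith, by linarith⟩⟩
      have hud : UniqueDiffOn ℝ 𝒰 := uniqueDiffOn_convex hconv hne
      have hdiff : ∀ z ∈ 𝒰, DifferentiableAt ℝ μ z := fun z hz =>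
        differentiableAt_of_deriv_ne_zero (ne_of_gt (hpos z hz))
      have heq : Set.EqOn (deriv μ) (derivWithin μ 𝒰) 𝒰 := fun z hz =>
        ((hdiff z hz).derivWithin (hud z hz)).symm
      have hcontW : ContinuousOn (derivWithin μ 𝒰) 𝒰 :=
        hμ.continuousOn_derivWithin hud one_le_two
      have hcontf : ContinuousOn (deriv μ) 𝒰 := hcontW.congr heq
      have hcont : ContinuousOn (fun t => Real.log (deriv μ t)) (Set.Icc x y) :=
        ContinuousOn.log (hcontf.mono hIcc)
          (fun t ht => ne_of_gt (hpos t (hIcc ht)))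
      have hder : ∀ c ∈ Set.Ioo x y,
          HasDerivAt (fun t => Real.log (deriv μ t))
            (deriv (deriv μ) c / deriv μ c) c := by
        intro c hc
        have hcint : c ∈ interior 𝒰 := hIooint hc
        have hμi : ContDiffOn ℝ 2 μ (interior 𝒰) := hμ.mono interior_subset
        have h2 : ContDiffOn ℝ 1 (deriv μ) (interior 𝒰) := by
          have := (contDiffOn_succ_iff_deriv_of_isOpen (n := 1)
            isOpen_interior).mp (by exact_mod_cast hμi)
          exact this.2.2
        have hd2 : DifferentiableAt ℝ (deriv μ) c :=
          (h2.differentiableOn one_ne_zero).differentiableAt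
            (isOpen_interior.mem_nhds hcint)
        exact hd2.hasDerivAt.log (ne_of_gt (hpos c (interior_subset hcint)))
      obtain ⟨c, hc, hceq⟩ := exists_hasDerivAt_eq_slope
        (fun t => Real.log (deriv μ t)) (fun c => deriv (deriv μ) c / deriv μ c)
        hxy hcont hder
      have hc𝒰 : c ∈ 𝒰 := hIoo hc
      have hfc : 0 < deriv μ c := hpos c hc𝒰
      have hbound : |deriv (deriv μ) c / deriv μ c| ≤ K := by
        rw [abs_div, abs_of_pos hfc, div_le_iff₀ hfc]
        exact le_trans (hsc c hc𝒰)
          (mul_le_mul_of_nonneg_right (hK c hc𝒰) (le_of_lt hfc))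
      have hslope : (Real.log (deriv μ y) - Real.log (deriv μ x)) / (y - x)
          = deriv (deriv μ) c / deriv μ c := hceq.symm
      have hyx : (0:ℝ) < y - x := by linarith
      calc |Real.log (deriv μ y) - Real.log (deriv μ x)|
          = |(Real.log (deriv μ y) - Real.log (deriv μ x)) / (y - x)| * (y - x) := by
            rw [abs_div, abs_of_pos hyx, div_mul_cancel₀]
            exact ne_of_gt hyx
        _ ≤ K * (y - x) := by
            rw [hslope]
            exact mul_le_mul_of_nonneg_right hbound (le_of_lt hyx)
    -- establish the log inequality in all cases
    have hlog : Real.log (deriv μ u') - Real.log (deriv μ u) ≤ K * |u - u'| := by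
      rcases lt_trichotomy u u' with h | h | h
      · have := key u hu u' hu' h
        rw [abs_sub_comm, abs_of_pos (by linarith : (0:ℝ) < u' - u)]
        exact le_trans (le_abs_self _) this
      · subst h
        simp [hKnn]
      · have := key u' hu' u hu h
        rw [abs_of_pos (by linarith : (0:ℝ) < u - u')]
        have h2 : |Real.log (deriv μ u') - Real.log (deriv μ u)| ≤ K * (u - u') := by
          rw [abs_sub_comm]; exact this
        exact le_trans (le_abs_self _) h2
    calc deriv μ u' = Real.exp (Real.log (deriv μ u')) :=
          (Real.exp_log (hpos u' hu')).symm
      _ ≤ Real.exp (Real.log (deriv μ u) + K * |u - u'|) :=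
          Real.exp_le_exp.mpr (by linarith)
      _ = deriv μ u * Real.exp (K * |u - u'|) := by
          rw [Real.exp_add, Real.exp_log (hpos u hu)]
end

section
/- Let μ be twice continuously differentiable on an interval 𝒰 with μ' > 0 on 𝒰 and |μ''| ≤ K·μ' on 𝒰 for some constant K < ∞. Then for any u, u' ∈ 𝒰, ∫₀¹ μ'(u + t(u'−u)) dt ≥ μ'(u)/(1 + K|u−u'|). -/
open Real intervalIntegral

/-- if `μ` is twice continuously differentiable on an interval `𝒰` with
`μ' > 0` and `|μ''| ≤ K μ'` on `𝒰`, then for `u, u' ∈ 𝒰`,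
`∫₀¹ μ'(u + t(u'-u)) dt ≥ μ'(u) / (1 + K |u - u'|)`. -/
theorem stmt_14 (𝒰 : Set ℝ) (h𝒰 : 𝒰.OrdConnected)
    (μ : ℝ → ℝ) (hμ : ContDiffOn ℝ 2 μ 𝒰)
    (hpos : ∀ u ∈ 𝒰, 0 < deriv μ u)
    (K : ℝ) (hK : 0 ≤ K)
    (hsc : ∀ u ∈ 𝒰, |deriv (deriv μ) u| ≤ K * deriv μ u) :
    ∀ u ∈ 𝒰, ∀ u' ∈ 𝒰,
      deriv μ u / (1 + K * |u - u'|) ≤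
        ∫ t in (0:ℝ)..1, deriv μ (u + t * (u' - u)) := by
  intro u hu u' hu'
  by_cases huu : u = u'
  · subst huu
    simp
  have hconv : Convex ℝ 𝒰 := convex_iff_ordConnected.mpr h𝒰
  set c : ℝ := u' - u with hc
  have hcne : c ≠ 0 := sub_ne_zero.mpr (Ne.symm huu)
  -- membership of segment points
  have hmem : ∀ t ∈ Set.Icc (0:ℝ) 1, u + t * c ∈ 𝒰 := by
    intro t ht
    have := hconv.add_smul_sub_mem hu hu' ht
    simpa [smul_eq_mul] using this
  -- interior membership for t ∈ (0,1)
  have hIoo : Set.Ioo (min u u') (max u u') ⊆ interior 𝒰 := by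
    apply isOpen_Ioo.subset_interior_iff.mpr
    intro x hx
    have h1 : min u u' ∈ 𝒰 := by rcases min_cases u u' with ⟨h, _⟩ | ⟨h, _⟩ <;> rw [h] <;> assumption
    have h2 : max u u' ∈ 𝒰 := by rcases max_cases u u' with ⟨h, _⟩ | ⟨h, _⟩ <;> rw [h] <;> assumption
    exact h𝒰.out h1 h2 ⟨le_of_lt hx.1, le_of_lt hx.2⟩
  have hintm : ∀ t ∈ Set.Ioo (0:ℝ) 1, u + t * c ∈ interior 𝒰 := by
    intro t ht
    apply hIoo
    rcases lt_or_gt_of_ne huu with h | h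
    · constructor
      · rw [min_eq_left h.le]; nlinarith [ht.1, ht.2, sub_pos.mpr h]
      · rw [max_eq_right h.le]; nlinarith [ht.1, ht.2, sub_pos.mpr h]
    · constructor
      · rw [min_eq_right h.le]; nlinarith [ht.1, ht.2, sub_pos.mpr h]
      · rw [max_eq_left h.le]; nlinarith [ht.1, ht.2, sub_pos.mpr h]
  have hUD : UniqueDiffOn ℝ 𝒰 := by
    apply uniqueDiffOn_convex hconv
    exact ⟨u + (1/2) * c, hintm (1/2) (by norm_num)⟩
  set f : ℝ → ℝ := derivWithin μ 𝒰 with hf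
  have hfd : ∀ x ∈ 𝒰, f x = deriv μ x := by
    intro x hx
    by_cases hdx : DifferentiableAt ℝ μ x
    · exact hdx.derivWithin (hUD x hx)
    · exfalso
      have := hpos x hx
      rw [deriv_zero_of_not_differentiableAt hdx] at this
      exact lt_irrefl _ this
  have hfc : ContinuousOn f 𝒰 := hμ.continuousOn_derivWithin hUD (by norm_num)
  -- second derivative at interior points
  have hf2 : ∀ x ∈ interior 𝒰, HasDerivAt f (deriv (deriv μ) x) x := by
    intro x hx
    have hμi : ContDiffOn ℝ 2 μ (interior 𝒰) := hμ.mono interior_subset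
    have hh := (contDiffOn_succ_iff_deriv_of_isOpen (n := 1) isOpen_interior).mp
      (by exact_mod_cast hμi)
    have hdd : DifferentiableAt ℝ (deriv μ) x :=
      (hh.2.2.differentiableOn one_ne_zero).differentiableAt (isOpen_interior.mem_nhds hx)
    have hD : HasDerivAt (deriv μ) (deriv (deriv μ) x) x := hdd.hasDerivAt
    have heq : deriv μ =ᶠ[nhds x] f := by
      filter_upwards [isOpen_interior.mem_nhds hx] with y hy
      exact (hfd y (interior_subset hy)).symm
    exact hD.congr_of_eventuallyEq heq.symm
  set a : ℝ := K * |u - u'| with ha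
  have ha0 : 0 ≤ a := mul_nonneg hK (abs_nonneg _)
  have hcabs : |c| = |u - u'| := by rw [hc, abs_sub_comm]
  set g : ℝ → ℝ := fun t => f (u + t * c) with hg
  have hgpos : ∀ t ∈ Set.Icc (0:ℝ) 1, 0 < g t := by
    intro t ht
    have hm := hmem t ht
    rw [hg]; simp only
    rw [hfd _ hm]
    exact hpos _ hm
  have hgc : ContinuousOn g (Set.Icc (0:ℝ) 1) := by
    apply hfc.comp (Continuous.continuousOn
      (continuous_const.add (continuous_id.mul continuous_const)))
    intro t ht
    exact hmem t ht
  -- derivative of g on (0,1)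
  have hgd : ∀ t ∈ Set.Ioo (0:ℝ) 1,
      HasDerivAt g (deriv (deriv μ) (u + t * c) * c) t := by
    intro t ht
    have hline : HasDerivAt (fun t : ℝ => u + t * c) c t := by
      simpa using ((hasDerivAt_id t).mul_const c).const_add u
    exact (hf2 _ (hintm t ht)).comp t hline
  -- φ = log g + a t is monotone on [0,1]
  set φ : ℝ → ℝ := fun t => Real.log (g t) + a * t with hφ
  have hφd : ∀ t ∈ Set.Ioo (0:ℝ) 1,
      HasDerivAt φ (deriv (deriv μ) (u + t * c) * c / g t + a) t := by
    intro t ht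
    have h1 := (hgd t ht).log (ne_of_gt (hgpos t (Set.mem_Icc_of_Ioo ht)))
    rw [hφ]; exact (h1.add ((hasDerivAt_id t).const_mul a)).congr_deriv (by simp)
  have hφmono : MonotoneOn φ (Set.Icc (0:ℝ) 1) := by
    apply monotoneOn_of_deriv_nonneg (convex_Icc 0 1)
    · apply ContinuousOn.add
      · exact (hgc.log (fun t ht => ne_of_gt (hgpos t ht)))
      · exact (continuous_const.mul continuous_id).continuousOn
    · rw [interior_Icc]
      intro t ht
      exact (hφd t ht).differentiableAt.differentiableWithinAt
    · rw [interior_Icc]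
      intro t ht
      rw [(hφd t ht).deriv]
      have hm := hmem t (Set.mem_Icc_of_Ioo ht)
      have hgt := hgpos t (Set.mem_Icc_of_Ioo ht)
      have hb : |deriv (deriv μ) (u + t * c)| ≤ K * g t := by
        have := hsc _ hm
        rwa [← hfd _ hm] at this
      have habs : |deriv (deriv μ) (u + t * c) * c| ≤ K * g t * |u - u'| := by
        rw [abs_mul, hcabs]
        exact mul_le_mul_of_nonneg_right hb (abs_nonneg _)
      have h1 : -a * g t ≤ deriv (deriv μ) (u + t * c) * c := by
        have := neg_abs_le (deriv (deriv μ) (u + t * c) * c)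
        nlinarith [habs]
      have h2 : -a ≤ deriv (deriv μ) (u + t * c) * c / g t :=
        (le_div_iff₀ hgt).mpr h1
      linarith
  -- pointwise lower bound g t ≥ g 0 * exp (-a * t)
  have hkey : ∀ t ∈ Set.Icc (0:ℝ) 1, g 0 * Real.exp (-a * t) ≤ g t := by
    intro t ht
    have h0 : (0:ℝ) ∈ Set.Icc (0:ℝ) 1 := by norm_num
    have := hφmono h0 ht ht.1
    have hlog : Real.log (g 0) - a * t ≤ Real.log (g t) := by
      simp only [hφ] at this
      simp at this
      linarith
    calc g 0 * Real.exp (-a * t)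
        = Real.exp (Real.log (g 0) - a * t) := by
          rw [Real.exp_sub, Real.exp_log (hgpos 0 h0), neg_mul, Real.exp_neg,
            div_eq_mul_inv]
      _ ≤ Real.exp (Real.log (g t)) := Real.exp_le_exp.mpr hlog
      _ = g t := Real.exp_log (hgpos t ht)
  have hg0 : g 0 = deriv μ u := by
    rw [hg]; simp only [zero_mul, add_zero]; exact hfd u hu
  have hg0pos : 0 < g 0 := hgpos 0 (by norm_num)
  -- integral congruence
  have hic : (∫ t in (0:ℝ)..1, deriv μ (u + t * (u' - u))) = ∫ t in (0:ℝ)..1, g t := by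
    apply intervalIntegral.integral_congr
    intro t ht
    rw [Set.uIcc_of_le (by norm_num : (0:ℝ) ≤ 1)] at ht
    exact (hfd _ (hmem t ht)).symm
  -- lower bound the integral
  have hgint : IntervalIntegrable g MeasureTheory.volume 0 1 := by
    apply ContinuousOn.intervalIntegrable
    rwa [Set.uIcc_of_le (by norm_num : (0:ℝ) ≤ 1)]
  have heint : IntervalIntegrable (fun t => g 0 * Real.exp (-a * t))
      MeasureTheory.volume 0 1 := by
    exact (continuous_const.mul
      (Real.continuous_exp.comp (continuous_const.mul continuous_id))).intervalIntegrable 0 1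
  have hmono := intervalIntegral.integral_mono_on (by norm_num : (0:ℝ) ≤ 1) heint hgint hkey
  -- compute the exponential integral
  have hIexp : (∫ t in (0:ℝ)..1, g 0 * Real.exp (-a * t)) =
      g 0 * ∫ t in (0:ℝ)..1, Real.exp (-a * t) := by
    rw [intervalIntegral.integral_const_mul]
  rw [hic]
  rcases eq_or_lt_of_le ha0 with haz | hap
  · -- a = 0
    have : (∫ t in (0:ℝ)..1, g 0 * Real.exp (-a * t)) = g 0 := by
      rw [← haz]; simp
    rw [this] at hmono
    rw [← hg0, ← haz]
    simpa using hmono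
  · -- a > 0
    have hexpint : (∫ t in (0:ℝ)..1, Real.exp (-a * t)) = (1 - Real.exp (-a)) / a := by
      have hFD : ∀ t ∈ Set.uIcc (0:ℝ) 1,
          HasDerivAt (fun s => -Real.exp (-a * s) / a) (Real.exp (-a * t)) t := by
        intro t ht
        have h1 : HasDerivAt (fun s : ℝ => -a * s) (-a) t := by
          simpa using (hasDerivAt_id t).const_mul (-a)
        have h2 := h1.exp
        have h3 := (h2.const_mul (-(1/a)))
        convert h3 using 1
        · ext s; field_simp
        · rfl
        · ext s; ring
        · rw [mul_comm (Real.exp (-a * t)) (-a), ← mul_assoc, neg_mul_neg, one_div, inv_mul_cancel₀ hap.ne', one_mul]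
      have hcont : ContinuousOn (fun t => Real.exp (-a * t)) (Set.uIcc (0:ℝ) 1) :=
        (Real.continuous_exp.comp (continuous_const.mul continuous_id)).continuousOn
      rw [intervalIntegral.integral_eq_sub_of_hasDerivAt hFD
        (hcont.intervalIntegrable)]
      field_simp
      rw [mul_zero, neg_zero, Real.exp_zero]; ring
    have hfinal : g 0 / (1 + a) ≤ g 0 * ((1 - Real.exp (-a)) / a) := by
      have hea : 1 + a ≤ Real.exp a := by linarith [Real.add_one_le_exp a]
      have heapos : 0 < Real.exp (-a) := Real.exp_pos (-a)
      have hna : Real.exp (-a) * Real.exp a = 1 := by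
        rw [← Real.exp_add]; simp
      have h4 : Real.exp (-a) * (1 + a) ≤ 1 := by nlinarith
      have h5 : 1 ≤ (1 - Real.exp (-a)) / a * (1 + a) := by
        rw [div_mul_eq_mul_div, le_div_iff₀ hap]
        nlinarith
      rw [div_le_iff₀ (by linarith : (0:ℝ) < 1 + a), mul_assoc]
      nlinarith [mul_le_mul_of_nonneg_left h5 hg0pos.le]
    rw [← hg0]
    calc g 0 / (1 + a) ≤ g 0 * ((1 - Real.exp (-a)) / a) := hfinal
      _ = ∫ t in (0:ℝ)..1, g 0 * Real.exp (-a * t) := by rw [hIexp, hexpint]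
      _ ≤ ∫ t in (0:ℝ)..1, g t := hmono
end

section
/- Let 𝒱 = [a,b] be a nonempty closed interval, f twice continuously differentiable on 𝒱 with |f''(v)| ≤ γ(v)·f'(v) for all v ∈ 𝒱, where A = sup_{v∈𝒱} γ(v) < ∞, and with f' either identically zero or strictly positive on 𝒱. Then for any finite sequence a₁,…,aₙ ∈ 𝒱, ∑_{t=1}^n f'(a_t) ≤ n·f'(b) + A·∑_{t=1}^n (f(b) − f(a_t)). -/
open Real

/-- self-bounding property of self-concordant functions: if `f` is twice
continuously differentiable on `[lo, hi]` with `|f''(v)| ≤ γ(v) f'(v)` there, `γ ≤ A`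
on `[lo, hi]`, and `f'` is either identically zero or strictly positive on `[lo, hi]`,
then for any points `a₁, …, aₙ ∈ [lo, hi]`,
`∑ f'(aₜ) ≤ n f'(hi) + A ∑ (f(hi) - f(aₜ))`. -/
theorem stmt_17 (lo hi : ℝ) (hlohi : lo ≤ hi)
    (f γ : ℝ → ℝ) (hf : ContDiffOn ℝ 2 f (Set.Icc lo hi))
    (hγ : ∀ v ∈ Set.Icc lo hi, 0 ≤ γ v)
    (hsc : ∀ v ∈ Set.Icc lo hi, |deriv (deriv f) v| ≤ γ v * deriv f v)
    (A : ℝ) (hA : ∀ v ∈ Set.Icc lo hi, γ v ≤ A)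
    (hdich : (∀ v ∈ Set.Icc lo hi, deriv f v = 0) ∨
             (∀ v ∈ Set.Icc lo hi, 0 < deriv f v))
    (n : ℕ) (a : Fin n → ℝ) (ha : ∀ t, a t ∈ Set.Icc lo hi) :
    ∑ t, deriv f (a t) ≤ n * deriv f hi + A * ∑ t, (f hi - f (a t)) := by
  have hhi : hi ∈ Set.Icc lo hi := Set.right_mem_Icc.mpr hlohi
  have hfc : ContinuousOn f (Set.Icc lo hi) := hf.continuousOn
  have hfd : DifferentiableOn ℝ f (interior (Set.Icc lo hi)) :=
    (hf.differentiableOn (by norm_num)).mono interior_subset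
  have hIoo : interior (Set.Icc lo hi) = Set.Ioo lo hi := interior_Icc
  -- Key pointwise bound
  have key : ∀ x ∈ Set.Icc lo hi,
      deriv f x ≤ deriv f hi + A * (f hi - f x) := by
    rcases hdich with hz | hp
    · -- derivative identically zero: f is constant on the interval
      intro x hx
      have hmono : MonotoneOn f (Set.Icc lo hi) :=
        monotoneOn_of_deriv_nonneg (convex_Icc lo hi) hfc hfd
          (fun v hv => le_of_eq (hz v (interior_subset hv)).symm)
      have hanti : AntitoneOn f (Set.Icc lo hi) :=
        antitoneOn_of_deriv_nonpos (convex_Icc lo hi) hfc hfd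
          (fun v hv => le_of_eq (hz v (interior_subset hv)))
      have h1 : f x ≤ f hi := hmono hx hhi hx.2
      have h2 : f hi ≤ f x := hanti hx hhi hx.2
      rw [hz x hx, hz hi hhi, le_antisymm h2 h1]
      simp
    · -- strictly positive derivative case
      intro x hx
      rcases eq_or_lt_of_le hlohi with heq | hlt
      · have hx' : x = hi := le_antisymm hx.2 (heq ▸ hx.1)
        simp [hx']
      -- f is differentiable (globally) at every point of Icc, since deriv f > 0 there
      have hdiff : ∀ v ∈ Set.Icc lo hi, DifferentiableAt ℝ f v := by
        intro v hv
        by_contra h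
        have : deriv f v = 0 := deriv_zero_of_not_differentiableAt h
        exact absurd this (ne_of_gt (hp v hv))
      have hA0 : (0:ℝ) ≤ A := le_trans (hγ hi hhi) (hA hi hhi)
      have hud : UniqueDiffOn ℝ (Set.Icc lo hi) := uniqueDiffOn_Icc hlt
      -- deriv f is continuous on Icc
      have hderivc : ContinuousOn (deriv f) (Set.Icc lo hi) := by
        have h1 : ContinuousOn (derivWithin f (Set.Icc lo hi)) (Set.Icc lo hi) :=
          hf.continuousOn_derivWithin hud one_le_two
        exact h1.congr fun v hv => ((hdiff v hv).derivWithin (hud v hv)).symm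
      -- deriv f is differentiable on the interior
      have hd2 : ∀ v ∈ Set.Ioo lo hi, DifferentiableAt ℝ (deriv f) v := by
        intro v hv
        have h1 : ContDiffOn ℝ 2 f (Set.Ioo lo hi) := hf.mono Set.Ioo_subset_Icc_self
        have h2 : ContDiffOn ℝ 1 (deriv f) (Set.Ioo lo hi) :=
          h1.deriv_of_isOpen isOpen_Ioo (by norm_num)
        exact (h2.differentiableOn one_ne_zero).differentiableAt (isOpen_Ioo.mem_nhds hv)
      -- the auxiliary function g
      set g : ℝ → ℝ := fun v => deriv f v + A * f v with hg
      have hgderiv : ∀ v ∈ Set.Ioo lo hi,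
          HasDerivAt g (deriv (deriv f) v + A * deriv f v) v := by
        intro v hv
        exact ((hd2 v hv).hasDerivAt).add
          (((hdiff v (Set.Ioo_subset_Icc_self hv)).hasDerivAt).const_mul A)
      have hmono : MonotoneOn g (Set.Icc lo hi) := by
        apply monotoneOn_of_deriv_nonneg (convex_Icc lo hi)
        · exact hderivc.add (continuousOn_const.mul hfc)
        · rw [hIoo]
          exact fun v hv => ((hgderiv v hv).differentiableAt).differentiableWithinAt
        · rw [hIoo]
          intro v hv
          rw [(hgderiv v hv).deriv]
          have hv' := Set.Ioo_subset_Icc_self hv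
          have h1 := hsc v hv'
          have h2 := abs_le.mp h1
          have h3 := hp v hv'
          have h4 := hA v hv'
          nlinarith [h2.1]
      have := hmono hx hhi hx.2
      simp only [hg] at this
      linarith
  calc ∑ t, deriv f (a t) ≤ ∑ t, (deriv f hi + A * (f hi - f (a t))) :=
        Finset.sum_le_sum fun t _ => key (a t) (ha t)
    _ = n * deriv f hi + A * ∑ t, (f hi - f (a t)) := by
        rw [Finset.sum_add_distrib, Finset.sum_const, Finset.card_univ, ← Finset.mul_sum]
        simp [nsmul_eq_mul]
end

section
/- Let Q(dy) = ∑_{i≥1} p_i δ_{2^i}(dy) with p_i = C₁·exp(−4^i) for even i and p_i = (C₁/4)·exp(−3·4^{i−1}) for odd i, where C₁ normalizes. Then Q is subgaussian, and for every even i ≥ 4, taking u = 2^{i+1} and U ∼ Q_u, the third central moment satisfies E[(U − μ(u))³] ≥ 0.038·u·E[(U − μ(u))²]. Consequently limsup_{u→∞} Γ_Q(u)/u > 0. -/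
open MeasureTheory Real

/-- Unnormalized weights: `p_i = exp(-4^i)` for even `i ≥ 1`, `p_i = exp(-3·4^{i-1})/4`
for odd `i`; no mass for `i = 0`. -/
noncomputable def w : ℕ → ℝ := fun i =>
  if i = 0 then 0
  else if Even i then Real.exp (-(4:ℝ) ^ i)
  else Real.exp (-3 * (4:ℝ) ^ (i - 1)) / 4

/-- The counterexample base distribution `Q = ∑_{i ≥ 1} C₁ w(i) δ_{2^i}`,
with `C₁` the normalizing constant. -/
noncomputable def Qce : Measure ℝ :=
  Measure.sum (fun i : ℕ =>
    (ENNReal.ofReal ((∑' j : ℕ, w j)⁻¹ * w i)) • Measure.dirac ((2:ℝ) ^ i))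

/-- Mean of the tilt of `Qce` at `u`. -/
noncomputable def μce (u : ℝ) : ℝ := ∫ y, y ∂(tilt Qce u)

/-- Second central moment of the tilt of `Qce` at `u`. -/
noncomputable def m2ce (u : ℝ) : ℝ := ∫ y, (y - μce u) ^ 2 ∂(tilt Qce u)

/-- Third central moment of the tilt of `Qce` at `u`. -/
noncomputable def m3ce (u : ℝ) : ℝ := ∫ y, (y - μce u) ^ 3 ∂(tilt Qce u)

namespace S18

/-- generic: withDensity of a dirac -/
lemma withDensity_dirac {f : ℝ → ENNReal} (hf : Measurable f) (x : ℝ) :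
    (Measure.dirac x).withDensity f = f x • Measure.dirac x := by
  ext s hs
  classical
  rw [withDensity_apply _ hs, Measure.smul_apply, setLIntegral_dirac' hf hs,
    Measure.dirac_apply' _ hs]
  by_cases h : x ∈ s <;> simp [h]

lemma integral_sum_smul_dirac {c : ℕ → ℝ} (hc : ∀ i, 0 ≤ c i) {x : ℕ → ℝ} {f : ℝ → ℝ}
    (hf : Measurable f) (hs : Summable (fun i => c i * |f (x i)|)) :
    ∫ y, f y ∂(Measure.sum (fun i => ENNReal.ofReal (c i) • Measure.dirac (x i)))
      = ∑' i, c i * f (x i) := by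
  have hint : Integrable f (Measure.sum (fun i => ENNReal.ofReal (c i) • Measure.dirac (x i))) := by
    constructor
    · exact hf.aestronglyMeasurable
    · rw [HasFiniteIntegral, lintegral_sum_measure]
      have : ∀ i : ℕ, ∫⁻ y, ‖f y‖ₑ ∂(ENNReal.ofReal (c i) • Measure.dirac (x i))
          = ENNReal.ofReal (c i * |f (x i)|) := by
        intro i
        rw [lintegral_smul_measure, lintegral_dirac' _ hf.enorm]
        rw [ENNReal.ofReal_mul (hc i)]
        congr 1
        rw [← Real.norm_eq_abs, ofReal_norm]
      simp_rw [this]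
      rw [← ENNReal.ofReal_tsum_of_nonneg (fun i => mul_nonneg (hc i) (abs_nonneg _)) hs]
      exact ENNReal.ofReal_lt_top
  rw [integral_sum_measure hint]
  congr 1; ext i
  rw [integral_smul_measure, integral_dirac' _ _ hf.stronglyMeasurable,
    ENNReal.toReal_ofReal (hc i)]
  simp

lemma apply_sum_smul_dirac (c : ℕ → ℝ) (x : ℕ → ℝ) {s : Set ℝ} (hs : MeasurableSet s) :
    (Measure.sum (fun i => ENNReal.ofReal (c i) • Measure.dirac (x i))) s
      = ∑' i, ENNReal.ofReal (c i) * s.indicator 1 (x i) := by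
  rw [Measure.sum_apply _ hs]
  congr 1; ext i
  rw [Measure.smul_apply, Measure.dirac_apply' _ hs]; rfl


/-! ### basics about `w` -/

lemma w_nonneg (i : ℕ) : 0 ≤ w i := by
  unfold w
  split_ifs <;> positivity

lemma four_pow_ge (n : ℕ) : 1 + 3*(n:ℝ) ≤ 4 ^ n := by
  have := one_add_mul_le_pow (a := (3:ℝ)) (by norm_num) n
  calc (1:ℝ) + 3*n = 1 + n*3 := by ring
  _ ≤ (1+3)^n := this
  _ = 4^n := by norm_num

lemma w_le (i : ℕ) : w i ≤ exp (-(3/4) * 4 ^ i) := by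
  unfold w
  split_ifs with h0 hev
  · positivity
  · apply exp_le_exp.2; nlinarith [pow_pos (by norm_num : (0:ℝ) < 4) i]
  · obtain ⟨k, rfl⟩ : ∃ k, i = k + 1 := ⟨i - 1, (Nat.succ_pred_eq_of_pos (Nat.pos_of_ne_zero h0)).symm⟩
    simp only [Nat.add_sub_cancel]
    have : exp (-3 * (4:ℝ)^k) / 4 ≤ exp (-3 * 4^k) := by
      have := exp_pos (-3 * (4:ℝ)^k); linarith
    refine this.trans (exp_le_exp.2 ?_)
    rw [pow_succ]
    ring_nf
    exact le_refl _

lemma w_le_geom (i : ℕ) : w i ≤ exp (-1) ^ i := by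
  refine (w_le i).trans ?_
  rw [← Real.exp_nat_mul]
  apply exp_le_exp.2
  have := four_pow_ge i
  nlinarith

lemma summable_w : Summable w :=
  Summable.of_nonneg_of_le w_nonneg w_le_geom
    (summable_geometric_of_lt_one (exp_pos _).le (exp_lt_one_iff.2 (by norm_num)))

lemma w_one : w 1 = exp (-3) / 4 := by norm_num [w]

lemma w_one_pos : 0 < w 1 := by rw [w_one]; positivity

lemma sumw_pos : 0 < ∑' j, w j :=
  w_one_pos.trans_le (summable_w.le_tsum 1 (fun j _ => w_nonneg j))

lemma sumw_ge : (1:ℝ)/81 ≤ ∑' j, w j := by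
  refine le_trans ?_ (summable_w.le_tsum 1 (fun j _ => w_nonneg j))
  have h3 : exp 3 < 20.25 := by
    have h := Real.exp_one_lt_d9
    have h0 := Real.exp_pos 1
    calc exp 3 = exp 1 ^ 3 := by
          rw [← Real.exp_nat_mul]; norm_num
    _ < 2.7182818286 ^ 3 := by
          exact pow_lt_pow_left₀ h h0.le (by norm_num)
    _ < 20.25 := by norm_num
  rw [w_one, Real.exp_neg]
  rw [div_le_div_iff₀ (by norm_num) (by norm_num), inv_eq_one_div,
    div_mul_eq_mul_div, le_div_iff₀ (Real.exp_pos 3)]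
  nlinarith

/-- The normalized coefficients of `Qce`. -/
noncomputable def c (i : ℕ) : ℝ := (∑' j, w j)⁻¹ * w i

lemma c_nonneg (i : ℕ) : 0 ≤ c i := mul_nonneg (inv_nonneg.2 sumw_pos.le) (w_nonneg i)

lemma c_le (i : ℕ) : c i ≤ 81 * w i := by
  unfold c
  have h1 : (∑' j, w j)⁻¹ ≤ 81 := by
    rw [inv_le_comm₀ (sumw_pos) (by norm_num)]
    calc (81:ℝ)⁻¹ = 1/81 := by norm_num
    _ ≤ ∑' j, w j := sumw_ge
  exact mul_le_mul_of_nonneg_right h1 (w_nonneg i)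

lemma summable_c : Summable c := summable_w.mul_left _

lemma tsum_c : ∑' i, c i = 1 := by
  unfold c
  rw [tsum_mul_left, inv_mul_cancel₀ sumw_pos.ne']

lemma Qce_eq : Qce = Measure.sum (fun i => ENNReal.ofReal (c i) • Measure.dirac ((2:ℝ) ^ i)) := rfl

lemma Qce_univ : Qce Set.univ = 1 := by
  rw [Qce_eq, apply_sum_smul_dirac _ _ MeasurableSet.univ]
  simp only [Set.indicator_univ, Pi.one_apply, mul_one]
  rw [← ENNReal.ofReal_tsum_of_nonneg c_nonneg summable_c, tsum_c, ENNReal.ofReal_one]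

/-- normalizing constant of the tilt -/
noncomputable def Zce (u : ℝ) : ℝ := ∫ z, exp (u * z) ∂Qce

lemma Zce_nonneg (u : ℝ) : 0 ≤ Zce u := integral_nonneg (fun z => (exp_pos _).le)

lemma tilt_Qce_eq (u : ℝ) :
    tilt Qce u = Measure.sum
      (fun i => ENNReal.ofReal (c i * (exp (u * 2 ^ i) / Zce u)) • Measure.dirac ((2:ℝ) ^ i)) := by
  have hm : Measurable (fun y : ℝ => ENNReal.ofReal (exp (u * y) / Zce u)) := by
    apply ENNReal.measurable_ofReal.comp
    exact ((Real.measurable_exp.comp (measurable_const.mul measurable_id)).div measurable_const)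
  rw [show tilt Qce u = Qce.withDensity (fun y => ENNReal.ofReal (exp (u * y) / Zce u)) from rfl,
    Qce_eq, withDensity_sum]
  congr 1; ext i
  rw [withDensity_smul_measure, withDensity_dirac hm, smul_smul,
    ← ENNReal.ofReal_mul (c_nonneg i)]

lemma integral_tilt (u : ℝ) {f : ℝ → ℝ} (hf : Measurable f)
    (hs : Summable (fun i => (c i * (exp (u * 2 ^ i) / Zce u)) * |f (2 ^ i)|)) :
    ∫ y, f y ∂(tilt Qce u) = ∑' i, (c i * (exp (u * 2 ^ i) / Zce u)) * f (2 ^ i) := by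
  rw [tilt_Qce_eq]
  exact integral_sum_smul_dirac
    (fun i => mul_nonneg (c_nonneg i) (div_nonneg (exp_pos _).le (Zce_nonneg u))) hf hs

lemma integral_Qce {f : ℝ → ℝ} (hf : Measurable f)
    (hs : Summable (fun i => c i * |f (2 ^ i)|)) :
    ∫ y, f y ∂Qce = ∑' i, c i * f (2 ^ i) := by
  rw [Qce_eq]
  exact integral_sum_smul_dirac c_nonneg hf hs


/-! ### key per-term estimate -/

lemma two_le_exp_one : (2:ℝ) ≤ exp 1 := by linarith [Real.add_one_le_exp (1:ℝ)]

lemma two_pow_le_exp (n : ℕ) : (2:ℝ) ^ n ≤ exp n := by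
  calc (2:ℝ)^n ≤ (exp 1)^n := pow_le_pow_left₀ (by norm_num) two_le_exp_one n
  _ = exp n := by rw [← Real.exp_nat_mul]; simp

lemma four_pow_le_exp (n : ℕ) : (4:ℝ) ^ n ≤ exp (2 * n) := by
  have h4 : (4:ℝ) ≤ exp 2 := by
    have : (exp 1)^2 = exp 2 := by rw [← Real.exp_nat_mul]; norm_num
    nlinarith [two_le_exp_one, Real.exp_pos (1:ℝ)]
  calc (4:ℝ)^n ≤ (exp 2)^n := pow_le_pow_left₀ (by norm_num) h4 n
  _ = exp (2 * n) := by rw [← Real.exp_nat_mul]; ring_nf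

lemma aux1 (i : ℕ) (hi : 4 ≤ i) : (2 * i + 12 : ℝ) ≤ (3/16) * 4 ^ i := by
  induction i, hi using Nat.le_induction with
  | base => norm_num
  | succ n hn ih =>
    have : (0:ℝ) < 4^n := by positivity
    push_cast [pow_succ] at *
    nlinarith

lemma aux2 (j : ℕ) (hj : 6 ≤ j) : (4 * j + 12 : ℝ) ≤ (1/4) * 4 ^ j := by
  induction j, hj using Nat.le_induction with
  | base => norm_num
  | succ n hn ih =>
    have : (0:ℝ) < 4^n := by positivity
    push_cast [pow_succ] at *
    nlinarith

lemma key {i j : ℕ} (hi : 4 ≤ i) (hj1 : j ≠ i) (hj2 : j ≠ i + 1) :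
    w j * exp ((2:ℝ) ^ (i+1) * 2 ^ j) * (((2:ℝ) ^ j + 2 ^ (i+1)) / 2 ^ i) ^ 3
      ≤ exp ((4:ℝ) ^ i) / 400 * (1/2) ^ j := by
  have h2ipos : (0:ℝ) < 2 ^ i := by positivity
  have h2jpos : (0:ℝ) < 2 ^ j := by positivity
  have h2i : (16:ℝ) ≤ 2 ^ i := by
    calc (16:ℝ) = 2^4 := by norm_num
    _ ≤ 2^i := pow_le_pow_right₀ (by norm_num) hi
  have h2i1 : (2:ℝ)^(i+1) = 2 * 2^i := by rw [pow_succ]; ring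
  have h4j : (4:ℝ)^j = (2^j)^2 := by
    rw [show (4:ℝ) = 2^2 by norm_num, ← pow_mul, mul_comm, pow_mul]
  have h4i : (4:ℝ)^i = (2^i)^2 := by
    rw [show (4:ℝ) = 2^2 by norm_num, ← pow_mul, mul_comm, pow_mul]
  have hwle := w_le j
  have hw0 := w_nonneg j
  have hhalf : ((1:ℝ)/2)^j = (2^j)⁻¹ := by
    rw [div_pow, one_pow, one_div]
  rcases lt_or_ge j i with hji | hji
  · -- Case A : j < i
    have hyY : (2:ℝ)^j * 2 ≤ 2^i := by
      rw [← pow_succ]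
      exact pow_le_pow_right₀ (by norm_num) (by omega)
    have hy1 : (1:ℝ) ≤ 2^j := one_le_pow₀ (by norm_num)
    -- cube bound
    have hcube : (((2:ℝ)^j + 2^(i+1))/2^i)^3 ≤ 16 := by
      have h1 : ((2:ℝ)^j + 2^(i+1))/2^i ≤ 5/2 := by
        rw [div_le_iff₀ h2ipos]
        nlinarith
      have h0 : 0 ≤ ((2:ℝ)^j + 2^(i+1))/2^i := by positivity
      calc (((2:ℝ)^j + 2^(i+1))/2^i)^3 ≤ (5/2:ℝ)^3 := pow_le_pow_left₀ h0 h1 3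
      _ ≤ 16 := by norm_num
    -- exponent bound
    have hexp : (2:ℝ)^(i+1) * 2^j - (3/4) * 4^j ≤ (13/16) * 4^i := by
      rw [h2i1, h4j, h4i]
      nlinarith [mul_nonneg (by linarith : (0:ℝ) ≤ 2^i/2 - 2^j)
        (by nlinarith : (0:ℝ) ≤ 13*(2:ℝ)^i/6 - 2^j)]
    -- small factor bound
    have hsmall : (6400:ℝ) * 2^j ≤ exp ((3/16) * 4^i) := by
      have h1 : (6400:ℝ) * 2^j ≤ 4^6 * 4^i := by
        have : (2:ℝ)^j ≤ 2^i := by nlinarith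
        have h2 : (2:ℝ)^i ≤ 4^i := pow_le_pow_left₀ (by norm_num) (by norm_num) i
        nlinarith [pow_pos (by norm_num : (0:ℝ) < 4) i]
      have h2 : (4:ℝ)^6 * 4^i = 4^(i+6) := by rw [pow_add]; ring
      have h3 : (4:ℝ)^(i+6) ≤ exp (2*((i+6:ℕ):ℝ)) := four_pow_le_exp (i+6)
      have h4 : Real.exp (2*((i+6:ℕ):ℝ)) ≤ exp ((3/16) * 4^i) := by
        apply exp_le_exp.2
        have := aux1 i hi
        push_cast
        linarith
      calc (6400:ℝ) * 2^j ≤ 4^(i+6) := by rw [← h2]; exact h1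
      _ ≤ _ := h3.trans h4
    -- assemble
    have step1 : w j * exp ((2:ℝ)^(i+1) * 2^j) * (((2:ℝ)^j + 2^(i+1))/2^i)^3
        ≤ 16 * exp ((13/16) * 4^i) := by
      have e1 : w j * exp ((2:ℝ)^(i+1) * 2^j) ≤ exp ((2:ℝ)^(i+1) * 2^j - (3/4) * 4^j) := by
        rw [Real.exp_sub]
        rw [div_eq_mul_inv, ← Real.exp_neg]
        have := exp_pos ((2:ℝ)^(i+1) * 2^j)
        calc w j * exp ((2:ℝ)^(i+1) * 2^j) ≤ exp (-(3/4 * 4^j)) * exp ((2:ℝ)^(i+1) * 2^j) := by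
              rw [show -(3/4 * (4:ℝ)^j) = -(3/4) * 4^j by ring]
              exact mul_le_mul_of_nonneg_right hwle this.le
        _ = exp ((2:ℝ)^(i+1) * 2^j) * exp (-(3/4 * 4^j)) := by ring
      have e2 : exp ((2:ℝ)^(i+1) * 2^j - (3/4) * 4^j) ≤ exp ((13/16) * 4^i) :=
        exp_le_exp.2 hexp
      have hc0 : (0:ℝ) ≤ (((2:ℝ)^j + 2^(i+1))/2^i)^3 := by positivity
      calc w j * exp ((2:ℝ)^(i+1) * 2^j) * (((2:ℝ)^j + 2^(i+1))/2^i)^3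
          ≤ exp ((13/16) * 4^i) * 16 := by
            apply mul_le_mul (e1.trans e2) hcube hc0 (exp_pos _).le
      _ = 16 * exp ((13/16) * 4^i) := by ring
    have step2 : (16:ℝ) * exp ((13/16) * 4^i) ≤ exp ((4:ℝ)^i) / 400 * (1/2)^j := by
      have hsplit : Real.exp ((4:ℝ)^i) = exp ((13/16) * 4^i) * exp ((3/16) * 4^i) := by
        rw [← Real.exp_add]; ring_nf
      rw [hsplit, hhalf,
        show Real.exp ((13/16)*(4:ℝ)^i) * exp ((3/16)*(4:ℝ)^i) / 400 * ((2:ℝ)^j)⁻¹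
          = exp ((13/16)*(4:ℝ)^i) * exp ((3/16)*(4:ℝ)^i) / (400 * 2^j) by
            field_simp,
        le_div_iff₀ (by positivity)]
      calc (16:ℝ) * exp ((13/16) * 4^i) * (400 * 2^j)
          = exp ((13/16) * 4^i) * (6400 * 2^j) := by ring
      _ ≤ exp ((13/16) * 4^i) * exp ((3/16) * 4^i) := by
            exact mul_le_mul_of_nonneg_left hsmall (exp_pos _).le
    exact step1.trans step2
  · -- Case B : j ≥ i + 2
    have hj6 : i + 2 ≤ j := by omega
    have h1 : (2:ℝ)^(i+1) * 2 ≤ 2^j := by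
      calc (2:ℝ)^(i+1) * 2 = 2^(i+2) := (pow_succ 2 (i+1)).symm
      _ ≤ 2^j := pow_le_pow_right₀ (by norm_num) hj6
    have hcube : (((2:ℝ)^j + 2^(i+1))/2^i)^3 ≤ (2 * 2^j)^3 := by
      have hnum : ((2:ℝ)^j + 2^(i+1))/2^i ≤ 2 * 2^j := by
        rw [div_le_iff₀ h2ipos]
        nlinarith
      have h0 : 0 ≤ ((2:ℝ)^j + 2^(i+1))/2^i := by positivity
      exact pow_le_pow_left₀ h0 hnum 3
    have hexp : w j * exp ((2:ℝ)^(i+1) * 2^j) ≤ exp (-(1/4) * 4^j) := by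
      have e1 : w j * exp ((2:ℝ)^(i+1) * 2^j) ≤ exp (-(3/4) * 4^j + (2:ℝ)^(i+1) * 2^j) := by
        rw [Real.exp_add]
        exact mul_le_mul_of_nonneg_right hwle (exp_pos _).le
      refine e1.trans (exp_le_exp.2 ?_)
      rw [h4j]
      nlinarith
    have hmain : exp (-(1/4) * 4^j) * (2 * 2^j)^3 ≤ exp ((4:ℝ)^i) / 400 * (1/2)^j := by
      have hE1 : (1:ℝ) ≤ exp ((4:ℝ)^i) := by
        rw [← Real.exp_zero]; exact exp_le_exp.2 (by positivity)
      have hkey : (400:ℝ) * ((2 * 2^j)^3 * 2^j) ≤ exp ((1/4) * 4^j) := by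
        have hle : (400:ℝ) * ((2 * 2^j)^3 * 2^j) ≤ 2^(4*j+12) := by
          have e : (2:ℝ)^(4*j+12) = ((2^j)^4) * 4096 := by
            rw [pow_add, pow_mul']; norm_num
          rw [e]
          have h4 : (0:ℝ) < (2^j)^4 := by positivity
          nlinarith
        have h2 : (2:ℝ)^(4*j+12) ≤ exp ((4*j+12 : ℕ) : ℝ) := two_pow_le_exp _
        have h3 : Real.exp ((4*j+12 : ℕ) : ℝ) ≤ exp ((1/4) * 4^j) := by
          apply exp_le_exp.2
          have := aux2 j (by omega)
          push_cast
          linarith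
        exact hle.trans (h2.trans h3)
      rw [hhalf,
        show Real.exp ((4:ℝ)^i) / 400 * ((2:ℝ)^j)⁻¹ = exp ((4:ℝ)^i) / (400 * 2^j) by
          field_simp,
        le_div_iff₀ (by positivity)]
      calc exp (-(1/4) * 4^j) * (2 * 2^j)^3 * (400 * 2^j)
          = exp (-(1/4) * 4^j) * (400 * ((2 * 2^j)^3 * 2^j)) := by ring
      _ ≤ exp (-(1/4) * 4^j) * exp ((1/4) * 4^j) := by
            exact mul_le_mul_of_nonneg_left hkey (exp_pos _).le
      _ = exp 0 := by rw [← Real.exp_add]; ring_nf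
      _ ≤ exp ((4:ℝ)^i) := by rw [Real.exp_zero]; exact hE1
    calc w j * exp ((2:ℝ)^(i+1) * 2^j) * (((2:ℝ)^j + 2^(i+1))/2^i)^3
        ≤ exp (-(1/4) * 4^j) * (2 * 2^j)^3 := by
          apply mul_le_mul hexp hcube (by positivity) (exp_pos _).le
    _ ≤ _ := hmain


/-! ### tsum splitting machinery -/

set_option maxHeartbeats 1000000 in
/-- `f` with the entries at `i` and `i+1` removed. -/
noncomputable def rest (f : ℕ → ℝ) (i : ℕ) : ℕ → ℝ :=
  fun j => if j = i ∨ j = i + 1 then 0 else f j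

lemma rest_apply_ne {f : ℕ → ℝ} {i j : ℕ} (h1 : j ≠ i) (h2 : j ≠ i+1) :
    rest f i j = f j := by simp [rest, h1, h2]

set_option maxHeartbeats 1000000 in
lemma split_machine {f : ℕ → ℝ} {i : ℕ} {B : ℝ} (hB0 : 0 ≤ B)
    (hb : ∀ j, j ≠ i → j ≠ i + 1 → |f j| ≤ B * (1/2) ^ j) :
    Summable f ∧ Summable (fun j => |f j|)
      ∧ (∑' j, f j = f i + f (i+1) + ∑' j, rest f i j)
      ∧ |∑' j, rest f i j| ≤ 4 * B := by
  classical
  have hgeo : Summable (fun j : ℕ => B * (1/2:ℝ) ^ j) :=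
    (summable_geometric_of_lt_one (by norm_num) (by norm_num)).mul_left B
  have hrb : ∀ j, |rest f i j| ≤ B * (1/2) ^ j := by
    intro j
    by_cases h1 : j = i ∨ j = i + 1
    · simp only [rest, if_pos h1, abs_zero]
      positivity
    · push_neg at h1
      rw [rest_apply_ne h1.1 h1.2]
      exact hb j h1.1 h1.2
  have hrsum : Summable (rest f i) := by
    apply Summable.of_abs
    exact Summable.of_nonneg_of_le (fun j => abs_nonneg _) hrb hgeo
  have hg : f = (fun j => if j = i ∨ j = i+1 then f j else 0) + rest f i := by
    funext j
    by_cases h1 : j = i ∨ j = i + 1 <;> simp [rest, h1]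
  have hgsupp : ∀ j, j ∉ ({i, i+1} : Finset ℕ) →
      (if j = i ∨ j = i+1 then f j else 0) = 0 := by
    intro j hj
    simp only [Finset.mem_insert, Finset.mem_singleton] at hj
    push_neg at hj
    simp [hj.1, hj.2]
  have hgsum : Summable (fun j => if j = i ∨ j = i+1 then f j else 0) :=
    summable_of_ne_finset_zero hgsupp
  have hfsum : Summable f := by rw [hg]; exact hgsum.add hrsum
  have habs : Summable (fun j => |f j|) := by
    have : ∀ j, |f j| ≤ (if j = i ∨ j = i+1 then |f j| else 0) + B * (1/2)^j := by
      intro j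
      by_cases h1 : j = i ∨ j = i + 1
      · simp only [if_pos h1]
        have : (0:ℝ) ≤ B * (1/2)^j := by positivity
        linarith
      · push_neg at h1
        simp only [if_neg (by tauto : ¬(j = i ∨ j = i+1))]
        have := hb j h1.1 h1.2
        linarith
    refine Summable.of_nonneg_of_le (fun j => abs_nonneg _) this ?_
    exact (summable_of_ne_finset_zero (s := {i, i+1}) (by
      intro j hj
      simp only [Finset.mem_insert, Finset.mem_singleton] at hj
      push_neg at hj
      simp [hj.1, hj.2])).add hgeo
  have htsum : ∑' j, f j = f i + f (i+1) + ∑' j, rest f i j := by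
    conv_lhs => rw [hg]
    simp only [Pi.add_apply]
    rw [Summable.tsum_add hgsum hrsum]
    congr 1
    rw [tsum_eq_sum (s := {i, i+1}) hgsupp]
    rw [Finset.sum_pair (by omega : i ≠ i + 1)]
    simp
  have hbound : |∑' j, rest f i j| ≤ 4 * B := by
    have habs' : Summable (fun j => ‖rest f i j‖) := by
      simpa [Real.norm_eq_abs] using hrsum.abs
    calc |∑' j, rest f i j| = ‖∑' j, rest f i j‖ := (Real.norm_eq_abs _).symm
    _ ≤ ∑' j, ‖rest f i j‖ := norm_tsum_le_tsum_norm habs'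
    _ = ∑' j, |rest f i j| := by simp [Real.norm_eq_abs]
    _ ≤ ∑' j : ℕ, B * (1/2)^j := Summable.tsum_le_tsum hrb hrsum.abs hgeo
    _ = B * 2 := by
          rw [tsum_mul_left, tsum_geometric_of_lt_one (by norm_num) (by norm_num)]
          norm_num
    _ ≤ 4 * B := by linarith
  exact ⟨hfsum, habs, htsum, hbound⟩

set_option maxHeartbeats 1000000 in
/-- the scalar cubic inequality at the heart of the computation -/
lemma cubic {t ρ2 ρ3 : ℝ} (h1 : 1.18 ≤ t) (h2 : t ≤ 1.22)
    (hρ2 : 0 ≤ ρ2) (hρ2' : ρ2 ≤ 1/100) (hρ3 : -(1/100) ≤ ρ3) :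
    0.076 * ((1-t)^2 + (2-t)^2/4 + ρ2) ≤ (1-t)^3 + (2-t)^3/4 + ρ3 := by
  nlinarith [sq_nonneg (t - 1.2), mul_nonneg (sub_nonneg.2 h1) (sub_nonneg.2 h2),
    sq_nonneg (t-1.18), sq_nonneg (1.22 - t)]


lemma mean_lb {a E R0 R1 : ℝ} (ha : 16 ≤ a) (hE : 0 < E)
    (hR0n : 0 ≤ R0) (hR0u : R0 ≤ E/100) (hR1l : -(a*E/100) ≤ R1) (hR1u : R1 ≤ a*E/100) :
    1.18*a*(E + E/4 + R0) ≤ E*a + E/4*(2*a) + R1 ∧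
      E*a + E/4*(2*a) + R1 ≤ 1.22*a*(E + E/4 + R0) := by
  have h1 : a*R0 ≤ a*(E/100) := mul_le_mul_of_nonneg_left hR0u (by linarith)
  have h2 : 0 ≤ a*R0 := mul_nonneg (by linarith) hR0n
  constructor <;> nlinarith [mul_pos (show (0:ℝ) < a by linarith) hE]

lemma var_pos {a E ν R2 : ℝ} (ha : 16 ≤ a) (hE : 0 < E) (hν2 : ν ≤ 1.22*a) (hR2n : 0 ≤ R2) :
    0 < E*(a-ν)^2 + E/4*(2*a-ν)^2 + R2 := by
  have h : 0.78*a ≤ 2*a - ν := by linarith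
  have h2 : (0:ℝ) < (2*a-ν)^2 := by nlinarith
  nlinarith [mul_pos hE h2, mul_nonneg hE.le (sq_nonneg (a-ν))]

lemma final_ineq {a E ν R2 R3 : ℝ} (ha : 16 ≤ a) (hE : 0 < E)
    (hν1 : 1.18*a ≤ ν) (hν2 : ν ≤ 1.22*a)
    (hR2n : 0 ≤ R2) (hR2u : R2 ≤ a^2*E/100) (hR3l : -(a^3*E/100) ≤ R3) :
    0.038*(2*a)*(E*(a-ν)^2 + E/4*(2*a-ν)^2 + R2) ≤ E*(a-ν)^3 + E/4*(2*a-ν)^3 + R3 := by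
  have hapos : (0:ℝ) < a := by linarith
  have ht1 : 1.18 ≤ ν/a := by rw [le_div_iff₀ hapos]; linarith
  have ht2 : ν/a ≤ 1.22 := by rw [div_le_iff₀ hapos]; linarith
  have hp2 : (0:ℝ) < a^2*E := by positivity
  have hp3 : (0:ℝ) < a^3*E := by positivity
  have hρ2' : R2/(a^2*E) ≤ 1/100 := by rw [div_le_iff₀ hp2]; linarith
  have hρ3 : -(1/100) ≤ R3/(a^3*E) := by rw [le_div_iff₀ hp3]; linarith
  have hc := cubic ht1 ht2 (div_nonneg hR2n hp2.le) hρ2' hρ3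
  have h' := mul_le_mul_of_nonneg_left hc hp3.le
  have e2 : a^3*E*(0.076*((1-ν/a)^2 + (2-ν/a)^2/4 + R2/(a^2*E)))
      = 0.038*(2*a)*(E*(a-ν)^2 + E/4*(2*a-ν)^2 + R2) := by
    field_simp
    ring
  have e3 : a^3*E*((1-ν/a)^3 + (2-ν/a)^3/4 + R3/(a^3*E))
      = E*(a-ν)^3 + E/4*(2*a-ν)^3 + R3 := by
    field_simp
  rw [e2, e3] at h'
  exact h'

lemma four_eq_sq (n : ℕ) : (4:ℝ)^n = (2^n)^2 := by
  rw [show (4:ℝ) = 2^2 by norm_num, ← pow_mul, mul_comm, pow_mul]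

set_option maxHeartbeats 2000000 in
lemma core (i : ℕ) (hie : Even i) (hi : 4 ≤ i) :
    0 < m2ce ((2:ℝ)^(i+1)) ∧
      0.038 * (2:ℝ)^(i+1) * m2ce ((2:ℝ)^(i+1)) ≤ m3ce ((2:ℝ)^(i+1)) := by
  have hS : 0 < ∑' j, w j := sumw_pos
  set S : ℝ := ∑' j, w j with hSdef
  set u : ℝ := (2:ℝ)^(i+1) with hu
  set a : ℝ := (2:ℝ)^i with ha
  set E : ℝ := exp ((4:ℝ)^i) with hE
  have hEpos : 0 < E := exp_pos _
  have ha16 : (16:ℝ) ≤ a := by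
    rw [ha]
    calc (16:ℝ) = 2^4 := by norm_num
    _ ≤ 2^i := pow_le_pow_right₀ (by norm_num) hi
  have hapos : (0:ℝ) < a := lt_of_lt_of_le (by norm_num) ha16
  have hua : u = 2*a := by rw [hu, ha, pow_succ]; ring
  set r : ℕ → ℝ := fun j => w j * exp (u * 2^j) with hr
  have hrnn : ∀ j, 0 ≤ r j := fun j => mul_nonneg (w_nonneg j) (exp_pos _).le
  have hi0 : i ≠ 0 := by omega
  -- exact values at i and i+1
  have hwi : w i = exp (-(4:ℝ)^i) := by
    simp only [w]
    rw [if_neg hi0, if_pos hie]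
  have hwi1 : w (i+1) = exp (-3 * (4:ℝ)^i)/4 := by
    simp only [w, Nat.add_sub_cancel]
    rw [if_neg (Nat.succ_ne_zero i), if_neg (by simp [Nat.even_add_one, hie])]
  have hriv : r i = E := by
    show w i * exp (u * 2^i) = E
    rw [hwi, ← ha, hua, ← Real.exp_add, hE]
    congr 1
    rw [ha, four_eq_sq]
    ring
  have hriv1 : r (i+1) = E/4 := by
    show w (i+1) * exp (u * 2^(i+1)) = E/4
    rw [hwi1, ← hu, hua, div_mul_eq_mul_div, ← Real.exp_add, hE]
    congr 2
    rw [ha, four_eq_sq]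
    ring
  -- master per-term bound
  have hkey' : ∀ j, j ≠ i → j ≠ i+1 → r j * (((2:ℝ)^j + u)/a)^3 ≤ E/400 * (1/2)^j := by
    intro j h1 h2
    exact key hi h1 h2
  have hmaster : ∀ (k : ℕ), k ≤ 3 → ∀ (ν : ℝ), 0 ≤ ν → ν ≤ u → ∀ j, j ≠ i → j ≠ i+1 →
      |r j * ((2:ℝ)^j - ν)^k| ≤ a^k * (E/400) * (1/2)^j := by
    intro k hk ν hν0 hνu j hj1 hj2
    have h2jpos : (0:ℝ) < 2^j := by positivity
    have hx : |(2:ℝ)^j - ν| ≤ 2^j + u := by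
      rw [abs_le]
      constructor <;> nlinarith
    have hratio1 : (1:ℝ) ≤ ((2:ℝ)^j + u)/a := by
      rw [le_div_iff₀ hapos, hua]
      nlinarith
    have h1 : |((2:ℝ)^j - ν)^k| ≤ a^k * (((2:ℝ)^j+u)/a)^3 := by
      rw [abs_pow]
      calc |(2:ℝ)^j - ν|^k ≤ ((2:ℝ)^j+u)^k := pow_le_pow_left₀ (abs_nonneg _) hx k
      _ = (a * (((2:ℝ)^j+u)/a))^k := by
            rw [mul_div_cancel₀ _ hapos.ne']
      _ = a^k * (((2:ℝ)^j+u)/a)^k := mul_pow _ _ _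
      _ ≤ a^k * (((2:ℝ)^j+u)/a)^3 :=
            mul_le_mul_of_nonneg_left (pow_le_pow_right₀ hratio1 hk) (pow_nonneg hapos.le k)
    calc |r j * ((2:ℝ)^j-ν)^k| = r j * |((2:ℝ)^j-ν)^k| := by
          rw [abs_mul, abs_of_nonneg (hrnn j)]
    _ ≤ r j * (a^k * (((2:ℝ)^j+u)/a)^3) := mul_le_mul_of_nonneg_left h1 (hrnn j)
    _ = a^k * (r j * (((2:ℝ)^j+u)/a)^3) := by ring
    _ ≤ a^k * (E/400 * (1/2)^j) :=
          mul_le_mul_of_nonneg_left (hkey' j hj1 hj2) (pow_nonneg hapos.le k)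
    _ = a^k * (E/400) * (1/2)^j := by ring
  have hupos : (0:ℝ) < u := by rw [hua]; linarith
  -- T0
  set f0 : ℕ → ℝ := fun j => r j * ((2:ℝ)^j - 0)^0 with hf0
  obtain ⟨hf0sum, hf0abs, hf0eq, hf0rem⟩ :=
    split_machine (f := f0) (i := i) (B := a^0 * (E/400))
      (by positivity) (fun j h1 h2 => hmaster 0 (by norm_num) 0 le_rfl hupos.le j h1 h2)
  have hf0r : ∀ j, f0 j = r j := by intro j; simp [hf0]
  set R0 : ℝ := ∑' j, rest f0 i j with hR0
  have hR0nn : 0 ≤ R0 := tsum_nonneg (fun j => by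
    by_cases h : j = i ∨ j = i + 1
    · simp [rest, h]
    · push_neg at h
      rw [rest_apply_ne h.1 h.2, hf0r]
      exact hrnn j)
  have hR0ub : R0 ≤ E/100 := by
    calc R0 ≤ 4 * (a^0 * (E/400)) := (abs_le.1 hf0rem).2
    _ = E/100 := by rw [pow_zero]; ring
  set T0 : ℝ := ∑' j, f0 j with hT0
  have hT0eq : T0 = E + E/4 + R0 := by
    rw [hf0eq, hf0r i, hf0r (i+1), hriv, hriv1]
  have hT0pos : 0 < T0 := by rw [hT0eq]; linarith
  -- T1
  set f1 : ℕ → ℝ := fun j => r j * ((2:ℝ)^j - 0)^1 with hf1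
  obtain ⟨hf1sum, hf1abs, hf1eq, hf1rem⟩ :=
    split_machine (f := f1) (i := i) (B := a^1 * (E/400)) (by positivity)
      (fun j h1 h2 => hmaster 1 (by norm_num) 0 le_rfl hupos.le j h1 h2)
  have hf1r : ∀ j, f1 j = r j * 2^j := by intro j; simp [hf1]
  set R1 : ℝ := ∑' j, rest f1 i j with hR1
  have hR1b : |R1| ≤ a*E/100 := by
    calc |R1| ≤ 4*(a^1*(E/400)) := hf1rem
    _ = a*E/100 := by rw [pow_one]; ring
  set T1 : ℝ := ∑' j, f1 j with hT1
  have hT1eq : T1 = E*a + E/4*(2*a) + R1 := by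
    rw [hf1eq, hf1r i, hf1r (i+1), hriv, hriv1, ← ha,
      show ((2:ℝ)^(i+1) : ℝ) = 2*a by rw [← hu]; exact hua]
  -- normalizing constant
  have hZ : Zce u = S⁻¹ * T0 := by
    rw [Zce, integral_Qce (f := fun z => exp (u*z))
      (Real.measurable_exp.comp (measurable_const.mul measurable_id)) ?s]
    case s =>
      apply Summable.congr (hf0sum.mul_left S⁻¹)
      intro j
      simp only [hf0, Real.abs_exp, c, ← hSdef]
      ring
    have he : ∀ j : ℕ, c j * exp (u * 2^j) = S⁻¹ * f0 j := by
      intro j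
      simp only [hf0, c, ← hSdef]
      ring
    rw [tsum_congr he, tsum_mul_left, ← hT0]
  have hcoeff : ∀ j, c j * (exp (u * 2^j)/Zce u) = r j / T0 := by
    intro j
    rw [hZ]
    simp only [c, ← hSdef, hr]
    field_simp
  -- generic moment reduction
  have hint : ∀ (φ : ℝ → ℝ), Measurable φ → ∀ (F : ℕ → ℝ), (∀ j, F j = r j * φ (2^j)) →
      Summable (fun j => |F j|) → ∫ y, φ y ∂(tilt Qce u) = (∑' j, F j)/T0 := by
    intro φ hφ F hF hFs
    rw [integral_tilt u hφ ?s]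
    case s =>
      apply Summable.congr (hFs.mul_left T0⁻¹)
      intro j
      rw [hcoeff j, hF j, abs_mul, abs_of_nonneg (hrnn j)]
      field_simp
    have he : ∀ j : ℕ, (c j * (exp (u * 2^j)/Zce u)) * φ (2^j) = F j * T0⁻¹ := by
      intro j
      rw [hcoeff j, hF j]
      field_simp
    rw [tsum_congr he, tsum_mul_right]
    rw [div_eq_mul_inv]
  -- the mean
  have hμeq : μce u = T1/T0 := by
    rw [μce, hint (fun y => y) measurable_id f1 (fun j => by rw [hf1r j]) hf1abs, ← hT1]
  -- mean bounds
  have hR1l : -(a*E/100) ≤ R1 := (abs_le.1 hR1b).1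
  have hR1u : R1 ≤ a*E/100 := (abs_le.1 hR1b).2
  have haR0 : a*R0 ≤ a*(E/100) := mul_le_mul_of_nonneg_left hR0ub hapos.le
  have haR0n : 0 ≤ a*R0 := mul_nonneg hapos.le hR0nn
  obtain ⟨hmb1, hmb2⟩ := mean_lb ha16 hEpos hR0nn hR0ub hR1l hR1u
  have hν1 : 1.18*a ≤ μce u := by
    rw [hμeq, le_div_iff₀ hT0pos, hT0eq, hT1eq]
    exact hmb1
  have hν2 : μce u ≤ 1.22*a := by
    rw [hμeq, div_le_iff₀ hT0pos, hT0eq, hT1eq]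
    exact hmb2
  have hν0 : 0 ≤ μce u := by linarith
  have hνu : μce u ≤ u := hν2.trans (by rw [hua]; linarith)
  -- second moment
  set f2 : ℕ → ℝ := fun j => r j * ((2:ℝ)^j - μce u)^2 with hf2
  obtain ⟨hf2sum, hf2abs, hf2eq, hf2rem⟩ :=
    split_machine (f := f2) (i := i) (B := a^2*(E/400)) (by positivity)
      (fun j h1 h2 => hmaster 2 (by norm_num) (μce u) hν0 hνu j h1 h2)
  set R2 : ℝ := ∑' j, rest f2 i j with hR2
  have hR2nn : 0 ≤ R2 := tsum_nonneg (fun j => by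
    by_cases h : j = i ∨ j = i + 1
    · simp [rest, h]
    · push_neg at h
      rw [rest_apply_ne h.1 h.2]
      exact mul_nonneg (hrnn j) (sq_nonneg _))
  have hR2ub : R2 ≤ a^2*E/100 := by
    calc R2 ≤ 4*(a^2*(E/400)) := (abs_le.1 hf2rem).2
    _ = a^2*E/100 := by ring
  set M2 : ℝ := ∑' j, f2 j with hM2
  have hm2 : m2ce u = M2/T0 := by
    rw [m2ce, hint (fun y => (y - μce u)^2) ((measurable_id.sub_const _).pow_const 2) f2
      (fun j => rfl) hf2abs]
  have hM2eq : M2 = E*(a - μce u)^2 + E/4*(u - μce u)^2 + R2 := by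
    rw [hf2eq,
      show f2 i = r i * (a - μce u)^2 by rw [hf2],
      show f2 (i+1) = r (i+1) * (u - μce u)^2 by rw [hf2],
      hriv, hriv1]
  -- third moment
  set f3 : ℕ → ℝ := fun j => r j * ((2:ℝ)^j - μce u)^3 with hf3
  obtain ⟨hf3sum, hf3abs, hf3eq, hf3rem⟩ :=
    split_machine (f := f3) (i := i) (B := a^3*(E/400)) (by positivity)
      (fun j h1 h2 => hmaster 3 (by norm_num) (μce u) hν0 hνu j h1 h2)
  set R3 : ℝ := ∑' j, rest f3 i j with hR3
  have hR3l : -(a^3*E/100) ≤ R3 := by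
    have := (abs_le.1 hf3rem).1
    calc -(a^3*E/100) = -(4*(a^3*(E/400))) := by ring
    _ ≤ R3 := this
  set M3 : ℝ := ∑' j, f3 j with hM3
  have hm3 : m3ce u = M3/T0 := by
    rw [m3ce, hint (fun y => (y - μce u)^3) ((measurable_id.sub_const _).pow_const 3) f3
      (fun j => rfl) hf3abs]
  have hM3eq : M3 = E*(a - μce u)^3 + E/4*(u - μce u)^3 + R3 := by
    rw [hf3eq,
      show f3 i = r i * (a - μce u)^3 by rw [hf3],
      show f3 (i+1) = r (i+1) * (u - μce u)^3 by rw [hf3],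
      hriv, hriv1]
  -- positivity of the variance
  have hM2pos : 0 < M2 := by
    rw [hM2eq]
    have hvp := var_pos (ν := μce u) ha16 hEpos hν2 hR2nn
    rw [← hua] at hvp
    exact hvp
  have hm2pos : 0 < m2ce u := by
    rw [hm2]; exact div_pos hM2pos hT0pos
  -- the core inequality
  have hfin : 0.038 * u * m2ce u ≤ m3ce u := by
    rw [hm2, hm3, hM2eq, hM3eq]
    have hF := final_ineq ha16 hEpos hν1 hν2 hR2nn hR2ub hR3l
    rw [← hua] at hF
    calc 0.038*u*((E*(a - μce u)^2 + E/4*(u - μce u)^2 + R2)/T0)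
        = (0.038*u*(E*(a - μce u)^2 + E/4*(u - μce u)^2 + R2))/T0 := by ring
    _ ≤ (E*(a - μce u)^3 + E/4*(u - μce u)^3 + R3)/T0 := by
        rw [div_le_div_iff₀ hT0pos hT0pos]
        exact mul_le_mul_of_nonneg_right hF hT0pos.le
  exact ⟨hm2pos, hfin⟩


/-! ### part 1 : subgaussian tail -/

lemma exp_le_half_pow (j : ℕ) : exp (-((4:ℝ)^j/2)) ≤ (1/2)^j := by
  have h1 : (2:ℝ)^j ≤ exp ((4:ℝ)^j/2) := by
    refine (two_pow_le_exp j).trans (exp_le_exp.2 ?_)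
    have := four_pow_ge j
    linarith
  have h2 : (0:ℝ) < 2^j := by positivity
  rw [Real.exp_neg, show ((1:ℝ)/2)^j = ((2:ℝ)^j)⁻¹ by rw [div_pow, one_pow, one_div]]
  exact inv_anti₀ h2 h1

lemma w_mul_two_pow_le (j : ℕ) : w j * 2^j ≤ (1/2)^j := by
  have h1 : w j ≤ exp (-((4:ℝ)^j/2)) * exp (-((4:ℝ)^j/4)) := by
    refine (w_le j).trans ?_
    rw [← Real.exp_add]
    exact exp_le_exp.2 (by linarith)
  have h2 : Real.exp (-((4:ℝ)^j/4)) * 2^j ≤ 1 := by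
    have h3 : (2:ℝ)^j ≤ exp ((4:ℝ)^j/4) := by
      refine (two_pow_le_exp j).trans (exp_le_exp.2 ?_)
      have h4 : (1:ℝ)+j ≤ 2^j := by
        have := one_add_mul_le_pow (a := (1:ℝ)) (by norm_num) j
        norm_num at this
        linarith
      have h5 : ((1:ℝ)+j)*((1:ℝ)+j) ≤ 2^j * 2^j :=
        mul_le_mul h4 h4 (by positivity) (by positivity)
      rw [four_eq_sq]
      nlinarith [sq_nonneg ((j:ℝ)-1)]
    calc Real.exp (-((4:ℝ)^j/4)) * 2^j ≤ exp (-((4:ℝ)^j/4)) * exp ((4:ℝ)^j/4) :=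
          mul_le_mul_of_nonneg_left h3 (exp_pos _).le
    _ = 1 := by rw [← Real.exp_add]; simp
  calc w j * 2^j ≤ (exp (-((4:ℝ)^j/2)) * exp (-((4:ℝ)^j/4))) * 2^j :=
        mul_le_mul_of_nonneg_right h1 (by positivity)
  _ = exp (-((4:ℝ)^j/2)) * (exp (-((4:ℝ)^j/4)) * 2^j) := by ring
  _ ≤ exp (-((4:ℝ)^j/2)) * 1 := mul_le_mul_of_nonneg_left h2 (exp_pos _).le
  _ = exp (-((4:ℝ)^j/2)) := mul_one _
  _ ≤ (1/2)^j := exp_le_half_pow j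

lemma summable_half_pow : Summable (fun j : ℕ => ((1:ℝ)/2)^j) :=
  summable_geometric_of_lt_one (by norm_num) (by norm_num)

lemma tsum_half_pow : ∑' j : ℕ, ((1:ℝ)/2)^j = 2 := by
  rw [tsum_geometric_of_lt_one (by norm_num) (by norm_num)]
  norm_num

lemma summable_c_two_pow : Summable (fun j => c j * 2^j) := by
  apply Summable.of_nonneg_of_le
    (fun j => mul_nonneg (c_nonneg j) (by positivity))
    (fun j => ?_) (summable_half_pow.mul_left 81)
  calc c j * 2^j ≤ 81 * w j * 2^j := by
        exact mul_le_mul_of_nonneg_right (c_le j) (by positivity)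
  _ = 81 * (w j * 2^j) := by ring
  _ ≤ 81 * (1/2)^j := by
        exact mul_le_mul_of_nonneg_left (w_mul_two_pow_le j) (by norm_num)

lemma mQ_eq : ∫ z, z ∂Qce = ∑' j, c j * 2^j := by
  rw [integral_Qce (f := fun z => z) measurable_id' ?s]
  case s =>
    apply summable_c_two_pow.congr
    intro j
    congr 1
    exact (abs_of_nonneg (by positivity : (0:ℝ) ≤ (2:ℝ)^j)).symm

lemma mQ_nonneg : 0 ≤ ∫ z, z ∂Qce := by
  rw [mQ_eq]
  exact tsum_nonneg (fun j => mul_nonneg (c_nonneg j) (by positivity))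

lemma mQ_le : ∫ z, z ∂Qce ≤ 162 := by
  rw [mQ_eq]
  calc ∑' j, c j * 2^j ≤ ∑' j : ℕ, 81 * (1/2)^j := by
        apply Summable.tsum_le_tsum ?_ summable_c_two_pow (summable_half_pow.mul_left 81)
        intro j
        calc c j * 2^j ≤ 81 * w j * 2^j :=
              mul_le_mul_of_nonneg_right (c_le j) (by positivity)
        _ = 81 * (w j * 2^j) := by ring
        _ ≤ 81 * (1/2)^j := mul_le_mul_of_nonneg_left (w_mul_two_pow_le j) (by norm_num)
  _ = 162 := by rw [tsum_mul_left, tsum_half_pow]; norm_num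

lemma tail_term {t : ℝ} (ht : 512 ≤ t) {j : ℕ} (hj : (t:ℝ)^2/4 ≤ 4^j) :
    w j ≤ exp (-t^2/16) * (1/2)^j := by
  have h1 : w j ≤ exp (-((4:ℝ)^j/4)) * exp (-((4:ℝ)^j/2)) := by
    refine (w_le j).trans ?_
    rw [← Real.exp_add]
    exact exp_le_exp.2 (by linarith)
  refine h1.trans (mul_le_mul ?_ (exp_le_half_pow j) (exp_pos _).le (exp_pos _).le)
  apply exp_le_exp.2
  linarith

lemma Qce_tail {t : ℝ} (ht : 512 ≤ t) :
    (Qce {y : ℝ | t ≤ |y - ∫ z, z ∂Qce|}).toReal ≤ 162 * exp (-t^2/16) := by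
  set m : ℝ := ∫ z, z ∂Qce with hm
  set A : Set ℝ := {y : ℝ | t ≤ |y - m|} with hA
  have hAm : MeasurableSet A :=
    measurableSet_le measurable_const (measurable_id.sub_const m).abs
  have hle : Qce A ≤ ENNReal.ofReal (162 * exp (-t^2/16)) := by
    rw [Qce_eq, apply_sum_smul_dirac _ _ hAm]
    have hterm : ∀ j, ENNReal.ofReal (c j) * A.indicator 1 ((2:ℝ)^j)
        ≤ ENNReal.ofReal (81 * (exp (-t^2/16) * (1/2)^j)) := by
      intro j
      by_cases hmem : (2:ℝ)^j ∈ A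
      · rw [Set.indicator_of_mem hmem, Pi.one_apply, mul_one]
        apply ENNReal.ofReal_le_ofReal
        have h2j : t/2 ≤ 2^j := by
          have hmem' : t ≤ |2^j - m| := hmem
          have h2jpos : (0:ℝ) < 2^j := by positivity
          rcases abs_cases ((2:ℝ)^j - m) with ⟨he, _⟩ | ⟨he, _⟩ <;>
            [skip; skip] <;> rw [he] at hmem' <;>
            nlinarith [mQ_nonneg, mQ_le]
        have h4j : t^2/4 ≤ 4^j := by
          rw [four_eq_sq]
          nlinarith
        calc c j ≤ 81 * w j := c_le j
        _ ≤ 81 * (exp (-t^2/16) * (1/2)^j) :=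
              mul_le_mul_of_nonneg_left (tail_term ht h4j) (by norm_num)
      · rw [Set.indicator_of_notMem hmem, mul_zero]
        positivity
    calc ∑' j, ENNReal.ofReal (c j) * A.indicator 1 ((2:ℝ)^j)
        ≤ ∑' j, ENNReal.ofReal (81 * (exp (-t^2/16) * (1/2)^j)) :=
          ENNReal.tsum_le_tsum hterm
    _ = ENNReal.ofReal (∑' j : ℕ, 81 * (exp (-t^2/16) * (1/2)^j)) := by
          rw [← ENNReal.ofReal_tsum_of_nonneg (fun j => by positivity)
            (((summable_half_pow.mul_left _).mul_left 81))]
    _ = ENNReal.ofReal (162 * exp (-t^2/16)) := by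
          congr 1
          rw [tsum_mul_left, tsum_mul_left, tsum_half_pow]
          ring
  exact ENNReal.toReal_le_of_le_ofReal (by positivity) hle

lemma Qce_le_one (A : Set ℝ) : (Qce A).toReal ≤ 1 := by
  have h1 : Qce A ≤ 1 := by
    rw [← Qce_univ]
    exact measure_mono (Set.subset_univ A)
  calc (Qce A).toReal ≤ (1 : ENNReal).toReal := ENNReal.toReal_mono (by norm_num) h1
  _ = 1 := by norm_num

end S18

/-- the distribution `Qce` is subgaussian, for every even `i ≥ 4` with
`u = 2^{i+1}` the third central moment of `Q_u` is at least `0.038 · u` times its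
variance, and consequently `limsup_{u→∞} Γ_Q(u)/u > 0`. -/
theorem stmt_18 :
    (∃ C > (0:ℝ), ∃ c > (0:ℝ), ∀ t : ℝ, 0 ≤ t →
      (Qce {y : ℝ | t ≤ |y - ∫ z, z ∂Qce|}).toReal ≤ C * Real.exp (-c * t ^ 2 / 2)) ∧
    (∀ i : ℕ, Even i → 4 ≤ i →
      0.038 * (2:ℝ) ^ (i + 1) * m2ce ((2:ℝ) ^ (i + 1)) ≤ m3ce ((2:ℝ) ^ (i + 1))) ∧
    (∀ s : ℝ, ∃ u : ℝ, s < u ∧ 0.038 * u ≤ |m3ce u| / m2ce u) := by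
  refine ⟨⟨243 * Real.exp 16384, by positivity, 1/8, by norm_num, ?_⟩, ?_, ?_⟩
  · -- subgaussian tail
    intro t ht
    have harg : -(1/8) * t^2/2 = -t^2/16 := by ring
    rw [harg]
    rcases lt_or_ge t 512 with h | h
    · have h1 : (1:ℝ) ≤ Real.exp 16384 * Real.exp (-t^2/16) := by
        rw [← Real.exp_add, ← Real.exp_zero]
        apply Real.exp_le_exp.2
        nlinarith
      calc (Qce {y : ℝ | t ≤ |y - ∫ z, z ∂Qce|}).toReal ≤ 1 := S18.Qce_le_one _
      _ ≤ 243 * (Real.exp 16384 * Real.exp (-t^2/16)) := by nlinarith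
      _ = 243 * Real.exp 16384 * Real.exp (-t^2/16) := by ring
    · calc (Qce {y : ℝ | t ≤ |y - ∫ z, z ∂Qce|}).toReal
          ≤ 162 * Real.exp (-t^2/16) := S18.Qce_tail h
      _ ≤ 243 * Real.exp 16384 * Real.exp (-t^2/16) := by
          have h1 : (1:ℝ) ≤ Real.exp 16384 := by
            rw [← Real.exp_zero]; exact Real.exp_le_exp.2 (by norm_num)
          nlinarith [Real.exp_pos (-t^2/16)]
  · -- part 2
    intro i hie hi
    exact (S18.core i hie hi).2
  · -- part 3
    intro s
    obtain ⟨n, hn⟩ := pow_unbounded_of_one_lt s (by norm_num : (1:ℝ) < 2)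
    obtain ⟨hpos, hineq⟩ := S18.core (2*n+4) ⟨n+2, by ring⟩ (by omega)
    refine ⟨(2:ℝ)^(2*n+4+1), lt_of_lt_of_le hn (pow_le_pow_right₀ one_le_two (by omega)), ?_⟩
    rw [le_div_iff₀ hpos]
    calc 0.038 * (2:ℝ)^(2*n+4+1) * m2ce ((2:ℝ)^(2*n+4+1))
        ≤ m3ce ((2:ℝ)^(2*n+4+1)) := hineq
    _ ≤ |m3ce ((2:ℝ)^(2*n+4+1))| := le_abs_self _
end
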